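/- arXiv:1109.6560 — 5 statements merged into one kernel-verified Lean document; each statement's English description precedes it below -/
import Mathlib

section
/- For |q|<1, the q-hypergeometric series ∑_{n≥0} (-1)^n q^{n(n+1)/2} / (-q;q)_n equals the partial theta function ψ(q) := ∑_{n≥0} (−12/n) q^{(n²−1)/24}, where (−12/·) is the Kronecker symbol. -/
noncomputable def qPoch (a q : ℂ) (n : ℕ) : ℂ :=
  ∏ j ∈ Finset.range n, (1 - a * q ^ j)
/-- The Kronecker symbol `(-12/n)`. -/
def kronNeg12 (n : ℕ) : ℤ :=
  if n % 12 = 1 ∨ n % 12 = 7 then 1 else if n % 12 = 5 ∨ n % 12 = 11 then -1 else 0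

namespace RogersAux

def tri (n : ℕ) : ℕ := n * (n + 1) / 2
def pent (j : ℕ) : ℕ := j * (3 * j + 1) / 2

lemma tri_even (n : ℕ) : 2 * tri n = n * (n + 1) := by
  have h := Nat.even_mul_succ_self n
  obtain ⟨m, hm⟩ := h
  unfold tri; omega

lemma tri_succ (n : ℕ) : tri (n + 1) = tri n + (n + 1) := by
  have h1 := tri_even n
  have h2 := tri_even (n + 1)
  have h3 : (n+1) * (n+1+1) = n * (n+1) + 2*(n+1) := by ring
  omega

lemma pent_even (j : ℕ) : 2 * pent j = j * (3 * j + 1) := by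
  have h := Nat.even_mul_succ_self j
  obtain ⟨m, hm⟩ := h
  have h3 : j * (3*j+1) + 2*j = 3 * (j * (j+1)) := by ring
  unfold pent; omega

lemma pent_succ (j : ℕ) : pent (j + 1) = pent j + (3 * j + 2) := by
  have h1 := pent_even j
  have h2 := pent_even (j + 1)
  have h3 : (j+1) * (3*(j+1)+1) = j * (3*j+1) + (6*j+4) := by ring
  omega

lemma le_pent (j : ℕ) : j ≤ pent j := by
  cases j with
  | zero => simp [pent]
  | succ i =>
    have h1 := pent_even (i+1)
    have h2 : (i+1) * 2 ≤ (i+1) * (3*(i+1)+1) := Nat.mul_le_mul_left (i+1) (by omega)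
    omega

lemma qPoch_zero (a q : ℂ) : qPoch a q 0 = 1 := by simp [qPoch]

lemma qPoch_succ (a q : ℂ) (n : ℕ) : qPoch a q (n + 1) = qPoch a q n * (1 - a * q ^ n) :=
  Finset.prod_range_succ _ _

lemma qPoch_shift (q : ℂ) (s n : ℕ) :
    qPoch (-(q ^ (s + 1))) q (n + 1) = (1 + q ^ (s + 1)) * qPoch (-(q ^ (s + 2))) q n := by
  unfold qPoch
  rw [Finset.prod_range_succ']
  rw [mul_comm]
  congr 1
  · simp
  · apply Finset.prod_congr rfl
    intro j _
    have : q ^ (s + 1) * q ^ (j + 1) = q ^ (s + 2) * q ^ j := by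
      rw [← pow_add, ← pow_add]; congr 1; omega
    rw [neg_mul, neg_mul, this]

lemma norm_one_add_ge {x : ℂ} : 1 - ‖x‖ ≤ ‖1 + x‖ := by
  have h := norm_add_le (1 + x) (-x)
  simp only [add_neg_cancel_right, norm_neg, norm_one] at h
  linarith

variable {q : ℂ} (hq : ‖q‖ < 1)

include hq

lemma norm_pow_le_norm (m : ℕ) (hm : 1 ≤ m) : ‖q‖ ^ m ≤ ‖q‖ := by
  calc ‖q‖ ^ m ≤ ‖q‖ ^ 1 := pow_le_pow_of_le_one (norm_nonneg q) hq.le hm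
  _ = ‖q‖ := pow_one _

lemma norm_qPoch_ge (s n : ℕ) : (1 - ‖q‖) ^ n ≤ ‖qPoch (-(q ^ (s + 1))) q n‖ := by
  induction n with
  | zero => simp [qPoch_zero]
  | succ m ih =>
    rw [qPoch_succ, pow_succ, norm_mul]
    have hfac : 1 - ‖q‖ ≤ ‖1 - -(q ^ (s + 1)) * q ^ m‖ := by
      have h1 : (1 : ℂ) - -(q ^ (s + 1)) * q ^ m = 1 + q ^ (s + 1 + m) := by
        rw [pow_add]; ring
      rw [h1]
      refine le_trans ?_ norm_one_add_ge
      have : ‖q ^ (s + 1 + m)‖ ≤ ‖q‖ := by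
        rw [norm_pow]; exact norm_pow_le_norm hq _ (by omega)
      linarith
    have h1r : (0:ℝ) ≤ 1 - ‖q‖ := by linarith
    exact mul_le_mul ih hfac h1r (norm_nonneg _)

lemma qPoch_ne_zero (s n : ℕ) : qPoch (-(q ^ (s + 1))) q n ≠ 0 := by
  have h := norm_qPoch_ge hq s n
  have h1 : (0:ℝ) < (1 - ‖q‖) ^ n := pow_pos (by linarith) n
  intro h0
  rw [h0, norm_zero] at h
  linarith

lemma one_add_pow_ne_zero (s : ℕ) : (1 : ℂ) + q ^ (s + 1) ≠ 0 := by
  intro h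
  have h1 : ‖(1:ℂ) + q ^ (s+1)‖ = 0 := by rw [h, norm_zero]
  have h2 := @norm_one_add_ge (q ^ (s+1))
  have h3 : ‖q ^ (s+1)‖ ≤ ‖q‖ := by rw [norm_pow]; exact norm_pow_le_norm hq _ (by omega)
  rw [h1] at h2
  linarith

/-- master real summable series -/
lemma summable_bound : Summable (fun n : ℕ => ‖q‖ ^ tri n * (1 / (1 - ‖q‖)) ^ n) := by
  set r := ‖q‖ with hr
  have hr0 : (0:ℝ) ≤ r := norm_nonneg q
  have h1r : (0:ℝ) < 1 - r := by linarith
  have hc0 : (0:ℝ) ≤ 1 / (1 - r) := by positivity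
  apply summable_of_ratio_norm_eventually_le (r := 1/2) (by norm_num)
  have htend : Filter.Tendsto (fun n : ℕ => r ^ (n + 1) * (1 / (1 - r))) Filter.atTop (nhds 0) := by
    have h1 : Filter.Tendsto (fun n : ℕ => r ^ (n+1)) Filter.atTop (nhds 0) :=
      (tendsto_pow_atTop_nhds_zero_of_lt_one hr0 hq).comp (Filter.tendsto_add_atTop_nat 1)
    simpa using h1.mul_const (1 / (1 - r))
  have hev := htend.eventually (gt_mem_nhds (by norm_num : (0:ℝ) < 1/2))
  filter_upwards [hev] with n hn
  have hterm : ∀ m : ℕ, (0:ℝ) ≤ r ^ tri m * (1 / (1 - r)) ^ m := fun m => by positivity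
  rw [Real.norm_of_nonneg (hterm _), Real.norm_of_nonneg (hterm _)]
  have e1 : tri (n + 1) = tri n + (n + 1) := tri_succ n
  rw [e1, pow_add, pow_succ]
  calc r ^ tri n * r ^ (n+1) * ((1/(1-r)) ^ n * (1/(1-r)))
      = (r ^ (n+1) * (1/(1-r))) * (r ^ tri n * (1/(1-r)) ^ n) := by ring
    _ ≤ (1/2) * (r ^ tri n * (1/(1-r)) ^ n) := by
        apply mul_le_mul_of_nonneg_right hn.le (hterm n)

lemma summable_master (t : ℕ) (f : ℕ → ℂ)
    (hf : ∀ n, ‖f n‖ ≤ ‖q‖ ^ tri n * (1 / (1 - ‖q‖)) ^ (n + t)) : Summable f := by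
  apply Summable.of_norm_bounded (((summable_bound hq).mul_left ((1 / (1 - ‖q‖)) ^ t)))
  intro n
  calc ‖f n‖ ≤ ‖q‖ ^ tri n * (1 / (1 - ‖q‖)) ^ (n + t) := hf n
    _ = (1 / (1 - ‖q‖)) ^ t * (‖q‖ ^ tri n * (1 / (1 - ‖q‖)) ^ n) := by
        rw [pow_add]; ring



noncomputable def hterm (q : ℂ) (k n : ℕ) : ℂ :=
  (-1) ^ n * q ^ (tri n + 2 * k * n) / qPoch (-(q ^ (k + 1))) q n

noncomputable def aterm (q : ℂ) (k n : ℕ) : ℂ :=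
  (-1) ^ n * q ^ (tri n + (2 * k + 1) * n) / qPoch (-(q ^ (k + 1))) q (n + 1)

noncomputable def bterm (q : ℂ) (k n : ℕ) : ℂ :=
  (-1) ^ n * q ^ (tri n + (2 * k + 1) * n) / qPoch (-(q ^ (k + 1))) q n

lemma norm_frac_le {x : ℂ} (n e t : ℕ) (he : tri n ≤ e)
    (hd : (1 - ‖q‖) ^ t ≤ ‖x‖) :
    ‖(-1 : ℂ) ^ n * q ^ e / x‖ ≤ ‖q‖ ^ tri n * (1 / (1 - ‖q‖)) ^ t := by
  have h1r : (0:ℝ) < 1 - ‖q‖ := by linarith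
  have hx : (0:ℝ) < ‖x‖ := lt_of_lt_of_le (pow_pos h1r t) hd
  have hnum : ‖(-1 : ℂ) ^ n * q ^ e‖ ≤ ‖q‖ ^ tri n := by
    rw [norm_mul, norm_pow, norm_pow, norm_neg, norm_one, one_pow, one_mul]
    exact pow_le_pow_of_le_one (norm_nonneg q) hq.le he
  have hcancel : (1 / (1 - ‖q‖)) ^ t * (1 - ‖q‖) ^ t = 1 := by
    rw [one_div, inv_pow, inv_mul_cancel₀ (pow_ne_zero t (ne_of_gt h1r))]
  rw [norm_div, div_le_iff₀ hx]
  calc ‖(-1 : ℂ) ^ n * q ^ e‖ ≤ ‖q‖ ^ tri n := hnum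
    _ = ‖q‖ ^ tri n * ((1 / (1 - ‖q‖)) ^ t * (1 - ‖q‖) ^ t) := by rw [hcancel, mul_one]
    _ = ‖q‖ ^ tri n * (1 / (1 - ‖q‖)) ^ t * (1 - ‖q‖) ^ t := by rw [mul_assoc]
    _ ≤ ‖q‖ ^ tri n * (1 / (1 - ‖q‖)) ^ t * ‖x‖ := by
        apply mul_le_mul_of_nonneg_left hd
        positivity

lemma norm_hterm_le (k n : ℕ) :
    ‖hterm q k n‖ ≤ ‖q‖ ^ tri n * (1 / (1 - ‖q‖)) ^ n :=
  norm_frac_le hq n _ n (Nat.le_add_right _ _) (norm_qPoch_ge hq k n)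

lemma summable_hterm (k : ℕ) : Summable (hterm q k) := by
  apply summable_master hq 0
  intro n
  simpa using norm_hterm_le hq k n

lemma summable_bterm (k : ℕ) : Summable (bterm q k) := by
  apply summable_master hq 0
  intro n
  have h := norm_frac_le hq (x := qPoch (-(q ^ (k+1))) q n) n (tri n + (2*k+1)*n) n
    (Nat.le_add_right _ _) (norm_qPoch_ge hq k n)
  simpa [bterm] using h

lemma summable_aterm (k : ℕ) : Summable (aterm q k) := by
  apply summable_master hq 1
  intro n
  exact norm_frac_le hq n _ (n+1) (Nat.le_add_right _ _) (norm_qPoch_ge hq k (n+1))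

omit hq in
lemma hterm_zero (k : ℕ) : hterm q k 0 = 1 := by
  simp [hterm, qPoch_zero, tri]

omit hq in
lemma bterm_zero (k : ℕ) : bterm q k 0 = 1 := by
  simp [bterm, qPoch_zero, tri]

omit hq in
lemma identity_I (k n : ℕ) : hterm q k (n + 1) = -q ^ (2 * k + 1) * aterm q k n := by
  unfold hterm aterm
  have he : tri (n + 1) + 2 * k * (n + 1) = (2 * k + 1) + (tri n + (2 * k + 1) * n) := by
    rw [tri_succ]; ring
  rw [he, pow_add, pow_succ]
  ring

lemma identity_II (k n : ℕ) :
    aterm q k n = bterm q k n - (q ^ (k + 1) / (1 + q ^ (k + 1))) * hterm q (k + 1) n := by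
  unfold aterm bterm hterm
  have hne1 : qPoch (-(q ^ (k+1))) q n ≠ 0 := qPoch_ne_zero hq k n
  have hne3 : (1 : ℂ) + q ^ (k+1) ≠ 0 := one_add_pow_ne_zero hq k
  have hF : (1 : ℂ) + q ^ (k+1) * q ^ n ≠ 0 := by
    have h := one_add_pow_ne_zero hq (k + n)
    rwa [show k + n + 1 = k + 1 + n from by ring, pow_add] at h
  have hPR : (1 + q ^ (k+1)) * qPoch (-(q ^ (k+2))) q n
      = qPoch (-(q ^ (k+1))) q n * (1 + q ^ (k+1) * q ^ n) := by
    rw [← qPoch_shift, qPoch_succ, ← pow_add]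
    ring
  have hnum : qPoch (-(q ^ (k+1))) q (n+1)
      = qPoch (-(q ^ (k+1))) q n * (1 + q ^ (k+1) * q ^ n) := by
    rw [qPoch_succ, ← pow_add]; ring
  have hRval : qPoch (-(q ^ (k+1+1))) q n
      = qPoch (-(q ^ (k+1))) q n * (1 + q ^ (k+1) * q ^ n) / (1 + q ^ (k+1)) := by
    rw [show k + 1 + 1 = k + 2 from rfl]
    field_simp
    linear_combination hPR
  have he2 : q ^ (tri n + 2 * (k+1) * n) = q ^ (tri n + (2*k+1)*n) * q ^ n := by
    rw [← pow_add]; congr 1; ring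
  rw [hnum, hRval, he2]
  field_simp
  ring
lemma identity_III (k n : ℕ) :
    bterm q k (n + 1) = -(q ^ (2*k+2) / (1 + q ^ (k+1))) * hterm q (k + 1) n := by
  unfold bterm hterm
  have hne3 : (1 : ℂ) + q ^ (k+1) ≠ 0 := one_add_pow_ne_zero hq k
  have hne2 : qPoch (-(q ^ (k+1+1))) q n ≠ 0 := qPoch_ne_zero hq (k+1) n
  have hshift : qPoch (-(q ^ (k+1))) q (n+1) = (1 + q ^ (k+1)) * qPoch (-(q ^ (k+2))) q n :=
    qPoch_shift q k n
  have he : tri (n+1) + (2*k+1)*(n+1) = (2*k+2) + (tri n + 2*(k+1)*n) := by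
    rw [tri_succ]; ring
  rw [hshift, he, pow_add, pow_succ, show k + 1 + 1 = k + 2 from rfl]
  field_simp
  ring



lemma Hstep (k : ℕ) :
    ∑' n, hterm q k n = 1 - q ^ (2*k+1) + q ^ (3*k+2) * ∑' n, hterm q (k+1) n := by
  have sh := summable_hterm hq k
  have sh1 := summable_hterm hq (k+1)
  have sa := summable_aterm hq k
  have sb := summable_bterm hq k
  have hne3 : (1:ℂ) + q ^ (k+1) ≠ 0 := one_add_pow_ne_zero hq k
  have hB : ∑' n, bterm q k n
      = 1 - (q ^ (2*k+2) / (1 + q ^ (k+1))) * ∑' n, hterm q (k+1) n := by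
    rw [Summable.tsum_eq_zero_add sb, bterm_zero, sub_eq_add_neg]
    congr 1
    calc ∑' n, bterm q k (n+1)
        = ∑' n, (-(q ^ (2*k+2) / (1 + q ^ (k+1))) * hterm q (k+1) n) :=
          tsum_congr (fun n => identity_III hq k n)
      _ = -(q ^ (2*k+2) / (1 + q ^ (k+1))) * ∑' n, hterm q (k+1) n := tsum_mul_left
      _ = -((q ^ (2*k+2) / (1 + q ^ (k+1))) * ∑' n, hterm q (k+1) n) := by ring

  have hA : ∑' n, aterm q k n = 1 - q ^ (k+1) * ∑' n, hterm q (k+1) n := by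
    calc ∑' n, aterm q k n
        = ∑' n, (bterm q k n - (q ^ (k+1) / (1 + q ^ (k+1))) * hterm q (k+1) n) :=
          tsum_congr (fun n => identity_II hq k n)
      _ = ∑' n, bterm q k n - ∑' n, ((q ^ (k+1) / (1 + q ^ (k+1))) * hterm q (k+1) n) :=
          Summable.tsum_sub sb (sh1.mul_left _)
      _ = ∑' n, bterm q k n - (q ^ (k+1) / (1 + q ^ (k+1))) * ∑' n, hterm q (k+1) n := by
          rw [tsum_mul_left]
      _ = 1 - q ^ (k+1) * ∑' n, hterm q (k+1) n := by
          rw [hB]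
          field_simp
          ring
  calc ∑' n, hterm q k n = hterm q k 0 + ∑' n, hterm q k (n+1) := Summable.tsum_eq_zero_add sh
    _ = 1 + ∑' n, (-q ^ (2*k+1) * aterm q k n) := by
        rw [hterm_zero]
        congr 1
        exact tsum_congr (fun n => identity_I k n)
    _ = 1 + (-q ^ (2*k+1)) * ∑' n, aterm q k n := by rw [tsum_mul_left]
    _ = 1 - q ^ (2*k+1) + q ^ (3*k+2) * ∑' n, hterm q (k+1) n := by
        rw [hA]
        have : q ^ (3*k+2) = q ^ (2*k+1) * q ^ (k+1) := by rw [← pow_add]; congr 1; ring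
        rw [this]
        ring

lemma Hiter (K : ℕ) :
    ∑' n, hterm q 0 n
      = (∑ j ∈ Finset.range K, (q ^ pent j - q ^ (pent j + (2*j+1))))
        + q ^ pent K * ∑' n, hterm q K n := by
  induction K with
  | zero => simp [pent]
  | succ m ih =>
    rw [ih, Finset.sum_range_succ, Hstep hq m, pent_succ m, pow_add, pow_add, pow_add]
    ring

lemma summable_norm_hterm (k : ℕ) : Summable (fun n => ‖hterm q k n‖) :=
  Summable.of_nonneg_of_le (fun n => norm_nonneg _) (norm_hterm_le hq k) (summable_bound hq)

lemma norm_Hsum_le (k : ℕ) :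
    ‖∑' n, hterm q k n‖ ≤ ∑' n, ‖q‖ ^ tri n * (1 / (1 - ‖q‖)) ^ n :=
  le_trans (norm_tsum_le_tsum_norm (summable_norm_hterm hq k))
    (Summable.tsum_le_tsum (norm_hterm_le hq k) (summable_norm_hterm hq k) (summable_bound hq))

lemma tendsto_rem :
    Filter.Tendsto (fun K => q ^ pent K * ∑' n, hterm q K n) Filter.atTop (nhds 0) := by
  set C := ∑' n, ‖q‖ ^ tri n * (1 / (1 - ‖q‖)) ^ n with hC
  refine squeeze_zero_norm (fun K => ?_)
    (by simpa using (tendsto_pow_atTop_nhds_zero_of_lt_one (norm_nonneg q) hq).mul_const C)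
  · show _ ≤ ‖q‖ ^ K * C
    rw [norm_mul, norm_pow]
    apply mul_le_mul
    · exact pow_le_pow_of_le_one (norm_nonneg q) hq.le (le_pent K)
    · exact norm_Hsum_le hq K
    · exact norm_nonneg _
    · positivity

lemma summable_theta : Summable (fun j => q ^ pent j - q ^ (pent j + (2*j+1))) := by
  apply Summable.of_norm_bounded (g := fun j => 2 * ‖q‖ ^ j)
    ((summable_geometric_of_lt_one (norm_nonneg q) hq).mul_left 2)
  intro j
  have h1 : ‖q ^ pent j‖ ≤ ‖q‖ ^ j := by
    rw [norm_pow]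
    exact pow_le_pow_of_le_one (norm_nonneg q) hq.le (le_pent j)
  have h2 : ‖q ^ (pent j + (2*j+1))‖ ≤ ‖q‖ ^ j := by
    rw [norm_pow]
    exact pow_le_pow_of_le_one (norm_nonneg q) hq.le (le_trans (le_pent j) (by omega))
  calc ‖q ^ pent j - q ^ (pent j + (2*j+1))‖
      ≤ ‖q ^ pent j‖ + ‖q ^ (pent j + (2*j+1))‖ := norm_sub_le _ _
    _ ≤ 2 * ‖q‖ ^ j := by linarith

lemma H0_eq : ∑' n, hterm q 0 n = ∑' j, (q ^ pent j - q ^ (pent j + (2*j+1))) := by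
  have sg := summable_theta hq
  have h1 := sg.hasSum.tendsto_sum_nat
  have h2 : Filter.Tendsto (fun K => ∑ j ∈ Finset.range K, (q ^ pent j - q ^ (pent j + (2*j+1))))
      Filter.atTop (nhds (∑' n, hterm q 0 n)) := by
    have heq : (fun K => ∑ j ∈ Finset.range K, (q ^ pent j - q ^ (pent j + (2*j+1))))
        = fun K => ∑' n, hterm q 0 n - q ^ pent K * ∑' n, hterm q K n := by
      funext K
      rw [Hiter hq K]
      ring
    rw [heq]
    simpa using tendsto_const_nhds.sub (tendsto_rem hq)
  exact tendsto_nhds_unique h2 h1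

section Kron

omit hq in
lemma kron_exp_le (n : ℕ) : n - 25 ≤ (n^2 - 1)/24 := by
  rw [Nat.le_div_iff_mul_le (by norm_num : (0:ℕ) < 24)]
  rcases le_or_gt n 25 with h | h
  · simp [Nat.sub_eq_zero_of_le h]
  · have h1 : n*25 ≤ n*n := Nat.mul_le_mul_left n h.le
    have h2 : n^2 = n*n := sq n
    omega

omit hq in
lemma norm_kron_le (n : ℕ) : ‖((kronNeg12 n : ℤ) : ℂ)‖ ≤ 1 := by
  unfold kronNeg12
  split_ifs <;> simp

lemma summable_kron :
    Summable (fun n : ℕ => ((kronNeg12 n : ℤ) : ℂ) * q ^ ((n^2 - 1)/24)) := by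
  apply Summable.of_norm_bounded (g := fun n => ‖q‖ ^ (n - 25))
  · have hgeo : Summable (fun n : ℕ => ‖q‖ ^ n) := summable_geometric_of_lt_one (norm_nonneg q) hq
    rw [← summable_nat_add_iff 25]
    simpa using hgeo
  · intro n
    rw [norm_mul, norm_pow]
    calc ‖((kronNeg12 n : ℤ) : ℂ)‖ * ‖q‖ ^ ((n^2-1)/24)
        ≤ 1 * ‖q‖ ^ ((n^2-1)/24) :=
          mul_le_mul_of_nonneg_right (norm_kron_le n) (by positivity)
      _ = ‖q‖ ^ ((n^2-1)/24) := one_mul _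
      _ ≤ ‖q‖ ^ (n - 25) := pow_le_pow_of_le_one (norm_nonneg q) hq.le (kron_exp_le n)

omit hq in
lemma tsum_six (f : ℕ → ℂ) (hsf : Summable f) :
    ∑' n, f n = ∑' j : ℕ,
      (f (6*j) + f (6*j+1) + f (6*j+2) + f (6*j+3) + f (6*j+4) + f (6*j+5)) := by
  have he : ∀ (j : ℕ) (i : Fin 6), (Nat.divModEquiv 6).symm (j, i) = 6*j + i.val := by
    intro j i
    simp [Nat.divModEquiv]
    ring
  have h1 : ∑' n : ℕ, f n = ∑' p : ℕ × Fin 6, f ((Nat.divModEquiv 6).symm p) :=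
    ((Nat.divModEquiv 6).symm.tsum_eq f).symm
  have hsf2 : Summable (fun p : ℕ × Fin 6 => f ((Nat.divModEquiv 6).symm p)) :=
    ((Nat.divModEquiv 6).symm.summable_iff).mpr hsf
  rw [h1, Summable.tsum_prod hsf2]
  apply tsum_congr
  intro j
  rw [tsum_fintype, Fin.sum_univ_six]
  simp only [he, show ((0:Fin 6):ℕ) = 0 from rfl, show ((1:Fin 6):ℕ) = 1 from rfl,
    show ((2:Fin 6):ℕ) = 2 from rfl, show ((3:Fin 6):ℕ) = 3 from rfl,
    show ((4:Fin 6):ℕ) = 4 from rfl, show ((5:Fin 6):ℕ) = 5 from rfl, add_zero]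

lemma kron_tsum_eq :
    (∑' n : ℕ, ((kronNeg12 n : ℤ) : ℂ) * q ^ ((n^2 - 1)/24))
      = ∑' j : ℕ, (q ^ pent j - q ^ (pent j + (2*j+1))) := by
  rw [tsum_six _ (summable_kron hq)]
  apply tsum_congr
  intro j
  have h2 := pent_even j
  have k0 : kronNeg12 (6*j) = 0 := by unfold kronNeg12; rw [if_neg, if_neg] <;> omega
  have k1 : kronNeg12 (6*j + 1) = 1 := by unfold kronNeg12; rw [if_pos]; omega
  have k2 : kronNeg12 (6*j + 2) = 0 := by unfold kronNeg12; rw [if_neg, if_neg] <;> omega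
  have k3 : kronNeg12 (6*j + 3) = 0 := by unfold kronNeg12; rw [if_neg, if_neg] <;> omega
  have k4 : kronNeg12 (6*j + 4) = 0 := by unfold kronNeg12; rw [if_neg, if_neg] <;> omega
  have k5 : kronNeg12 (6*j + 5) = -1 := by unfold kronNeg12; rw [if_neg, if_pos] <;> omega
  have e1 : ((6*j + 1)^2 - 1)/24 = pent j := by
    have hsq : (6*j+1)^2 = 24 * pent j + 1 := by
      calc (6*j+1)^2 = 12*(j*(3*j+1)) + 1 := by ring
        _ = 12*(2*pent j) + 1 := by rw [← h2]
        _ = 24*pent j + 1 := by ring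
    rw [hsq]
    omega
  have e5 : ((6*j + 5)^2 - 1)/24 = pent j + (2*j+1) := by
    have hsq : (6*j+5)^2 = 24 * (pent j + (2*j+1)) + 1 := by
      calc (6*j+5)^2 = 12*(j*(3*j+1)) + (48*j+25) := by ring
        _ = 12*(2*pent j) + (48*j+25) := by rw [← h2]
        _ = 24*(pent j + (2*j+1)) + 1 := by ring
    rw [hsq]
    omega
  simp only [k0, k1, k2, k3, k4, k5, e1, e5]
  push_cast
  ring

end Kron

end RogersAux

theorem rogers_partial_theta (q : ℂ) (hq : ‖q‖ < 1) :
    ∑' n : ℕ, (-1) ^ n * q ^ (n * (n + 1) / 2) / qPoch (-q) q n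
      = ∑' n : ℕ, (kronNeg12 n : ℂ) * q ^ ((n ^ 2 - 1) / 24) := by
  have hL : (∑' n : ℕ, (-1) ^ n * q ^ (n * (n + 1) / 2) / qPoch (-q) q n)
      = ∑' n, RogersAux.hterm q 0 n := by
    apply tsum_congr
    intro n
    simp [RogersAux.hterm, RogersAux.tri]
  rw [hL, RogersAux.H0_eq hq, ← RogersAux.kron_tsum_eq hq]
end

section
/- For |q|<1 and suitable a, b, t with |t|<1, the basic hypergeometric series F(a,b;t) := ∑_{n≥0} (aq;q)_n/(bq;q)_n · t^n satisfies the difference equation F(a,b;t) = (1−b)/(1−t) + (b−atq)/(1−t) · F(a,b;tq). -/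
noncomputable def F (a b t q : ℂ) : ℂ :=
  ∑' n : ℕ, qPoch (a * q) q n / qPoch (b * q) q n * t ^ n

open Filter Topology

lemma qPoch_succ (x q : ℂ) (n : ℕ) : qPoch x q (n+1) = qPoch x q n * (1 - x * q^n) :=
  Finset.prod_range_succ _ _

lemma qPoch_ne_zero {x q : ℂ} (h : ∀ j : ℕ, 1 - x * q ^ j ≠ 0) (n : ℕ) : qPoch x q n ≠ 0 :=
  Finset.prod_ne_zero_iff.mpr fun j _ => h j

lemma F_summable (a b q : ℂ) (hq : ‖q‖ < 1)
    (hbq : ∀ j : ℕ, 1 - b * q * q ^ j ≠ 0) {s : ℂ} (hs : ‖s‖ < 1) :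
    Summable (fun n : ℕ => qPoch (a*q) q n / qPoch (b*q) q n * s ^ n) := by
  by_cases hs0 : s = 0
  · apply summable_of_ne_finset_zero (s := {0})
    intro n hn
    simp only [Finset.mem_singleton] at hn
    simp [hs0, zero_pow hn]
  by_cases ha : ∃ m : ℕ, 1 - a * q * q ^ m = 0
  · obtain ⟨m, hm⟩ := ha
    apply summable_of_ne_finset_zero (s := Finset.range (m+1))
    intro n hn
    simp only [Finset.mem_range, not_lt] at hn
    have hz : qPoch (a*q) q n = 0 := by
      apply Finset.prod_eq_zero (i := m) (Finset.mem_range.mpr (by omega))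
      simpa [mul_assoc] using hm
    simp [hz]
  push_neg at ha
  have ha' : ∀ j : ℕ, 1 - (a*q) * q ^ j ≠ 0 := by
    intro j; simpa [mul_assoc] using ha j
  have hbq' : ∀ j : ℕ, 1 - (b*q) * q ^ j ≠ 0 := by
    intro j; simpa [mul_assoc] using hbq j
  set f := fun n : ℕ => qPoch (a*q) q n / qPoch (b*q) q n * s ^ n with hf
  have hfne : ∀ n, f n ≠ 0 := fun n =>
    mul_ne_zero (div_ne_zero (qPoch_ne_zero ha' n) (qPoch_ne_zero hbq' n)) (pow_ne_zero n hs0)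
  apply summable_of_ratio_test_tendsto_lt_one hs (Eventually.of_forall hfne)
  have hrad : ∀ n, f (n+1) = (1 - a*q*q^n)/(1 - b*q*q^n) * s * f n := by
    intro n
    simp only [hf, qPoch_succ]
    have h2 := qPoch_ne_zero hbq' n
    have h3 := hbq n
    field_simp
    ring
  have h2 : Tendsto (fun n : ℕ => ‖(1 - a*q*q^n)/(1 - b*q*q^n) * s‖) atTop (𝓝 ‖s‖) := by
    have hq0 : Tendsto (fun n : ℕ => (q : ℂ) ^ n) atTop (𝓝 0) :=
      tendsto_pow_atTop_nhds_zero_of_norm_lt_one hq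
    have hnum : Tendsto (fun n : ℕ => 1 - a*q*q^n) atTop (𝓝 1) := by
      have := (hq0.const_mul (a*q)).const_sub 1
      simpa [mul_assoc] using this
    have hden : Tendsto (fun n : ℕ => 1 - b*q*q^n) atTop (𝓝 1) := by
      have := (hq0.const_mul (b*q)).const_sub 1
      simpa [mul_assoc] using this
    have h := ((hnum.div hden one_ne_zero).mul_const s).norm
    simpa using h
  refine h2.congr fun n => ?_
  rw [hrad n, norm_mul ((1 - a*q*q^n)/(1 - b*q*q^n) * s) (f n), norm_mul, mul_div_assoc,
    div_self (norm_ne_zero_iff.mpr (hfne n)), mul_one]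

set_option maxHeartbeats 1000000 in
theorem fine_difference_equation (a b t q : ℂ) (hq : ‖q‖ < 1) (ht : ‖t‖ < 1)
    (hb : ∀ m : ℕ, b ≠ (q ^ (m + 1))⁻¹) :
    F a b t q = (1 - b) / (1 - t) + (b - a * t * q) / (1 - t) * F a b (t * q) q := by
  have hbq : ∀ j : ℕ, 1 - b * q * q ^ j ≠ 0 := by
    intro j h
    have h1 : q ^ (j+1) * b = 1 := by linear_combination -h
    exact hb j (eq_inv_of_mul_eq_one_right h1)
  have hbq' : ∀ j : ℕ, 1 - (b*q) * q ^ j ≠ 0 := by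
    intro j; simpa [mul_assoc] using hbq j
  have ht1 : (1:ℂ) - t ≠ 0 := by
    intro h
    have : t = 1 := by linear_combination -h
    rw [this] at ht; norm_num at ht
  have htq : ‖t * q‖ < 1 := by
    rw [norm_mul]
    nlinarith [norm_nonneg t, norm_nonneg q]
  set c : ℕ → ℂ := fun n => qPoch (a*q) q n / qPoch (b*q) q n with hc
  have hF1 : F a b t q = ∑' n, c n * t ^ n := rfl
  have hF2 : F a b (t*q) q = ∑' n, c n * (t*q) ^ n := rfl
  have c0 : c 0 = 1 := by simp [hc, qPoch]
  have S1 : Summable (fun n => c n * t ^ n) := F_summable a b q hq hbq ht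
  have S2 : Summable (fun n => c n * (t*q) ^ n) := F_summable a b q hq hbq htq
  have S1' : Summable (fun n => c (n+1) * t ^ (n+1)) :=
    (summable_nat_add_iff 1).mpr S1
  have S2' : Summable (fun n => c (n+1) * (t*q) ^ (n+1)) :=
    (summable_nat_add_iff 1).mpr S2
  have h1 : ∀ n : ℕ, c (n+1) * (1 - b*q*q^n) = c n * (1 - a*q*q^n) := by
    intro n
    simp only [hc, qPoch_succ]
    have h2 := qPoch_ne_zero hbq' n
    have h3 := hbq n
    rw [div_mul_eq_mul_div, div_mul_eq_mul_div, div_eq_div_iff (mul_ne_zero h2 h3) h2]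
    ring
  have Sf1 : Summable (fun n => c n * t ^ (n+1)) :=
    (S1.mul_left t).congr fun n => by ring
  have Sf2 : Summable (fun n => b * q^(n+1) * (c (n+1) * t ^ (n+1))) :=
    (S2'.mul_left b).congr fun n => by ring
  have Sf3 : Summable (fun n => a * q^(n+1) * (c n * t ^ (n+1))) :=
    (S2.mul_left (a*t*q)).congr fun n => by ring
  have key : (∑' n, c n * t^n)
      = (1 - b) + t * (∑' n, c n * t^n) + (b - a*t*q) * (∑' n, c n * (t*q)^n) := by
    have e1 : t * (∑' n, c n * t^n) = ∑' n, c n * t^(n+1) := by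
      rw [← tsum_mul_left]; exact tsum_congr fun n => by ring
    have e2 : b * (∑' n, c n * (t*q)^n)
        = b + ∑' n, b * q^(n+1) * (c (n+1) * t^(n+1)) := by
      rw [← tsum_mul_left, Summable.tsum_eq_zero_add (S2.mul_left b)]
      congr 1
      · simp [c0]
      · exact tsum_congr fun n => by ring
    have e3 : a*t*q * (∑' n, c n * (t*q)^n) = ∑' n, a * q^(n+1) * (c n * t^(n+1)) := by
      rw [← tsum_mul_left]; exact tsum_congr fun n => by ring
    rw [sub_mul, e1, e2, e3, Summable.tsum_eq_zero_add S1]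
    have e4 : (∑' n, c (n+1) * t^(n+1))
        = ∑' n, (c n * t^(n+1) + b * q^(n+1) * (c (n+1) * t^(n+1))
            - a * q^(n+1) * (c n * t^(n+1))) :=
      tsum_congr fun n => by linear_combination t^(n+1) * h1 n
    rw [e4, Summable.tsum_sub (Sf1.add Sf2) Sf3, Summable.tsum_add Sf1 Sf2, c0]
    ring
  rw [hF1, hF2]
  field_simp
  linear_combination key
end

section
/- For |q|<1 and |t|<1, (1−t) F(0,b;t) = ∑_{n≥0} (bt)^n q^{n²} / ((bq;q)_n (tq;q)_n), where F(0,b;t) := ∑_{n≥0} t^n/(bq;q)_n. -/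
set_option maxHeartbeats 1600000

namespace Fine123

open Filter


lemma one_sub_sum_le_prod {ι : Type*} (s : Finset ι) (f : ι → ℝ)
    (h0 : ∀ i ∈ s, 0 ≤ f i) (h1 : ∀ i ∈ s, f i ≤ 1) :
    1 - ∑ i ∈ s, f i ≤ ∏ i ∈ s, (1 - f i) := by
  classical
  induction s using Finset.induction with
  | empty => simp
  | @insert a s' hx ih =>
    rw [Finset.sum_insert hx, Finset.prod_insert hx]
    have ha0 := h0 a (Finset.mem_insert_self _ _)
    have ha1 := h1 a (Finset.mem_insert_self _ _)
    have hs0 : ∀ i ∈ s', 0 ≤ f i := fun i hi => h0 i (Finset.mem_insert_of_mem hi)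
    have hs1 : ∀ i ∈ s', f i ≤ 1 := fun i hi => h1 i (Finset.mem_insert_of_mem hi)
    have hS : 0 ≤ ∑ i ∈ s', f i := Finset.sum_nonneg hs0
    have := ih hs0 hs1
    nlinarith [this]

lemma geom_bound {r : ℝ} (h0 : 0 ≤ r) (h1 : r < 1) (K : ℕ) :
    ∑ i ∈ Finset.range K, r ^ i ≤ 1 / (1 - r) := by
  rw [geom_sum_eq (by linarith : r ≠ 1)]
  have h2 : (r ^ K - 1) / (r - 1) = (1 - r ^ K) / (1 - r) := by
    rw [← neg_div_neg_eq]; ring_nf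
  rw [h2, div_le_div_iff₀ (by linarith) (by linarith)]
  have h3 : 0 ≤ r ^ K := pow_nonneg h0 K
  nlinarith

lemma lower_bound (x q : ℂ) (hq : ‖q‖ < 1) (hx : ∀ m : ℕ, x * q ^ (m + 1) ≠ 1) :
    ∃ c > 0, ∀ s n : ℕ, c ≤ ‖∏ j ∈ Finset.range n, (1 - x * q ^ (s + 1 + j))‖ := by
  classical
  set r := ‖q‖ with hr
  set B := ‖x‖ with hB
  have hr0 : 0 ≤ r := norm_nonneg _
  have hB0 : 0 ≤ B := norm_nonneg _
  -- choose M with B * r^(M+1) / (1-r) ≤ 1/2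
  obtain ⟨M, hM⟩ : ∃ M : ℕ, B * r ^ (M + 1) / (1 - r) ≤ 1 / 2 := by
    have h : Filter.Tendsto (fun M : ℕ => B * r ^ (M + 1) / (1 - r)) Filter.atTop (nhds 0) := by
      have := tendsto_pow_atTop_nhds_zero_of_lt_one hr0 hq
      have h2 : Filter.Tendsto (fun M : ℕ => r ^ (M + 1)) Filter.atTop (nhds 0) :=
        this.comp (Filter.tendsto_add_atTop_nat 1)
      have := (h2.const_mul B).div_const (1 - r)
      simpa using this
    exact (h.eventually_le_const (by norm_num : (0:ℝ) < 1/2)).exists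
  have hfac : ∀ m : ℕ, 1 ≤ m → (1 : ℂ) - x * q ^ m ≠ 0 := by
    intro m hm h
    obtain ⟨k, rfl⟩ := Nat.exists_eq_add_of_le hm
    rw [add_comm 1 k] at h
    exact hx k (by linear_combination -h)
  set g : ℕ → ℝ := fun m => min ‖(1 : ℂ) - x * q ^ m‖ 1 with hg
  have hg0 : ∀ m, 1 ≤ m → 0 < g m := by
    intro m hm
    exact lt_min (norm_pos_iff.mpr (hfac m hm)) one_pos
  have hg1 : ∀ m, g m ≤ 1 := fun m => min_le_right _ _
  have hgnn : ∀ m, 0 ≤ g m := fun m => le_min (norm_nonneg _) zero_le_one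
  refine ⟨(∏ m ∈ Finset.Icc 1 M, g m) * (1 / 2), by
    apply mul_pos (Finset.prod_pos fun m hm => hg0 m (Finset.mem_Icc.mp hm).1) (by norm_num), ?_⟩
  intro s n
  rw [norm_prod]
  rw [← Finset.prod_filter_mul_prod_filter_not (Finset.range n) (fun j => s + 1 + j ≤ M)]
  have hinj : Function.Injective (fun j : ℕ => s + 1 + j) := fun a b h => by
    simpa using h
  -- first factor
  have h1 : (∏ m ∈ Finset.Icc 1 M, g m) ≤
      ∏ j ∈ (Finset.range n).filter (fun j => s + 1 + j ≤ M), ‖(1:ℂ) - x * q ^ (s + 1 + j)‖ := by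
    have step1 : ∏ j ∈ (Finset.range n).filter (fun j => s + 1 + j ≤ M), g (s + 1 + j) ≤
        ∏ j ∈ (Finset.range n).filter (fun j => s + 1 + j ≤ M), ‖(1:ℂ) - x * q ^ (s + 1 + j)‖ :=
      Finset.prod_le_prod (fun j _ => hgnn _) (fun j _ => min_le_left _ _)
    refine le_trans ?_ step1
    set T := ((Finset.range n).filter (fun j => s + 1 + j ≤ M)).image (fun j => s + 1 + j) with hT
    have himg : ∏ j ∈ (Finset.range n).filter (fun j => s + 1 + j ≤ M), g (s + 1 + j) =
        ∏ m ∈ T, g m := (Finset.prod_image (fun a _ b _ h => hinj h)).symm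
    rw [himg]
    have hsub : T ⊆ Finset.Icc 1 M := by
      intro m hm
      simp only [hT, Finset.mem_image, Finset.mem_filter, Finset.mem_range] at hm
      obtain ⟨j, ⟨_, hj2⟩, rfl⟩ := hm
      exact Finset.mem_Icc.mpr ⟨by omega, hj2⟩
    rw [← Finset.prod_sdiff hsub]
    have hle1 : ∏ m ∈ Finset.Icc 1 M \ T, g m ≤ 1 :=
      Finset.prod_le_one (fun m _ => hgnn m) (fun m _ => hg1 m)
    have hT0 : 0 ≤ ∏ m ∈ T, g m := Finset.prod_nonneg fun m _ => hgnn m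
    nlinarith
  -- second factor
  have h2 : (1:ℝ) / 2 ≤
      ∏ j ∈ (Finset.range n).filter (fun j => ¬ (s + 1 + j ≤ M)), ‖(1:ℂ) - x * q ^ (s + 1 + j)‖ := by
    set S := (Finset.range n).filter (fun j => ¬ (s + 1 + j ≤ M)) with hS
    have hfle : ∀ j ∈ S, B * r ^ (s + 1 + j) ≤ 1 / 2 := by
      intro j hj
      simp only [hS, Finset.mem_filter, not_le] at hj
      have h1 : r ^ (s + 1 + j) ≤ r ^ (M + 1) :=
        pow_le_pow_of_le_one hr0 hq.le (by omega)
      have h2 : B * r ^ (M + 1) ≤ B * r ^ (M + 1) / (1 - r) := by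
        rw [le_div_iff₀ (by linarith)]
        nlinarith [mul_nonneg hB0 (pow_nonneg hr0 (M+1))]
      nlinarith [mul_le_mul_of_nonneg_left h1 hB0]
    have hw : 1 - ∑ j ∈ S, B * r ^ (s + 1 + j) ≤ ∏ j ∈ S, (1 - B * r ^ (s + 1 + j)) :=
      one_sub_sum_le_prod S _ (fun j _ => mul_nonneg hB0 (pow_nonneg hr0 _))
        (fun j hj => le_trans (hfle j hj) (by norm_num))
    have hsum : ∑ j ∈ S, B * r ^ (s + 1 + j) ≤ 1 / 2 := by
      set T' := S.image (fun j => s + 1 + j) with hT'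
      have himg : ∑ j ∈ S, B * r ^ (s + 1 + j) = ∑ m ∈ T', B * r ^ m :=
        (Finset.sum_image (f := fun m => B * r ^ m) (fun a _ b _ h => hinj h)).symm
      rw [himg]
      have hsub : T' ⊆ (Finset.range (s + n)).image (fun i => M + 1 + i) := by
        intro m hm
        simp only [hT', hS, Finset.mem_image, Finset.mem_filter, Finset.mem_range, not_le] at hm ⊢
        obtain ⟨j, ⟨hj1, hj2⟩, rfl⟩ := hm
        exact ⟨s + 1 + j - (M + 1), by omega, by omega⟩
      calc ∑ m ∈ T', B * r ^ m
          ≤ ∑ m ∈ (Finset.range (s + n)).image (fun i => M + 1 + i), B * r ^ m := by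
            apply Finset.sum_le_sum_of_subset_of_nonneg hsub
            intro m _ _
            exact mul_nonneg hB0 (pow_nonneg hr0 _)
        _ = ∑ i ∈ Finset.range (s + n), B * r ^ (M + 1 + i) :=
            Finset.sum_image (f := fun m => B * r ^ m) (fun a _ b _ h => by omega)
        _ = B * r ^ (M + 1) * ∑ i ∈ Finset.range (s + n), r ^ i := by
            rw [Finset.mul_sum]
            exact Finset.sum_congr rfl fun i _ => by rw [pow_add]; ring
        _ ≤ B * r ^ (M + 1) * (1 / (1 - r)) := by
            apply mul_le_mul_of_nonneg_left (geom_bound hr0 hq _)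
              (mul_nonneg hB0 (pow_nonneg hr0 _))
        _ = B * r ^ (M + 1) / (1 - r) := by ring
        _ ≤ 1 / 2 := hM
    have hprodle : ∏ j ∈ S, (1 - B * r ^ (s + 1 + j)) ≤
        ∏ j ∈ S, ‖(1:ℂ) - x * q ^ (s + 1 + j)‖ := by
      apply Finset.prod_le_prod
      · intro j hj
        nlinarith [hfle j hj]
      · intro j hj
        have : ‖x * q ^ (s + 1 + j)‖ = B * r ^ (s + 1 + j) := by
          rw [norm_mul, norm_pow]
        calc 1 - B * r ^ (s + 1 + j) = 1 - ‖x * q ^ (s + 1 + j)‖ := by rw [this]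
          _ = ‖(1:ℂ)‖ - ‖x * q ^ (s + 1 + j)‖ := by simp
          _ ≤ ‖(1:ℂ) - x * q ^ (s + 1 + j)‖ := norm_sub_norm_le _ _
    linarith
  have hnn : (0:ℝ) ≤ ∏ m ∈ Finset.Icc 1 M, g m := Finset.prod_nonneg fun m _ => hgnn m
  have hnn2 : (0:ℝ) ≤ ∏ j ∈ (Finset.range n).filter (fun j => s + 1 + j ≤ M),
      ‖(1:ℂ) - x * q ^ (s + 1 + j)‖ := Finset.prod_nonneg fun j _ => norm_nonneg _
  calc (∏ m ∈ Finset.Icc 1 M, g m) * (1 / 2)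
      ≤ (∏ j ∈ (Finset.range n).filter (fun j => s + 1 + j ≤ M), ‖(1:ℂ) - x * q ^ (s + 1 + j)‖)
        * ∏ j ∈ (Finset.range n).filter (fun j => ¬ (s + 1 + j ≤ M)), ‖(1:ℂ) - x * q ^ (s + 1 + j)‖ := by
        apply mul_le_mul h1 h2 (by norm_num) hnn2
    _ = _ := by rfl



lemma qPoch_succ (a q : ℂ) (n : ℕ) :
    qPoch a q (n + 1) = qPoch a q n * (1 - a * q ^ n) :=
  Finset.prod_range_succ _ _

lemma qPoch_succ' (a q : ℂ) (n : ℕ) :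
    qPoch a q (n + 1) = (1 - a) * qPoch (a * q) q n := by
  unfold qPoch
  rw [Finset.prod_range_succ']
  rw [mul_comm]
  congr 1
  · simp
  · exact Finset.prod_congr rfl fun j _ => by ring

noncomputable def Fs (x y q : ℂ) : ℂ := ∑' n : ℕ, y ^ n / qPoch (x * q) q n

noncomputable def Gs (x y q : ℂ) : ℂ :=
  ∑' n : ℕ, (x * y) ^ n * q ^ (n ^ 2) / (qPoch (x * q) q n * qPoch (y * q) q n)

lemma sumF (x y q : ℂ) (hy : ‖y‖ < 1) {c : ℝ} (hc0 : 0 < c)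
    (hc : ∀ n, c ≤ ‖qPoch (x * q) q n‖) :
    Summable fun n : ℕ => y ^ n / qPoch (x * q) q n := by
  apply Summable.of_norm_bounded (g := fun n => ‖y‖ ^ n / c)
    ((summable_geometric_of_lt_one (norm_nonneg y) hy).div_const c)
  intro n
  have h0 : 0 < ‖qPoch (x * q) q n‖ := lt_of_lt_of_le hc0 (hc n)
  rw [norm_div, norm_pow, div_le_div_iff₀ h0 hc0]
  exact mul_le_mul_of_nonneg_left (hc n) (pow_nonneg (norm_nonneg y) n)

lemma sumAux (x y q : ℂ) (hq : ‖q‖ < 1) :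
    Summable (fun n : ℕ => ‖x * y‖ ^ n * ‖q‖ ^ (n ^ 2)) := by
  apply summable_of_ratio_norm_eventually_le (r := 1 / 2) (by norm_num)
  have ht2 : Tendsto (fun n : ℕ => ‖x * y‖ * ‖q‖ ^ n) atTop (nhds 0) := by
    simpa using (tendsto_pow_atTop_nhds_zero_of_lt_one (norm_nonneg q) hq).const_mul (‖x * y‖)
  filter_upwards [ht2.eventually_le_const (by norm_num : (0:ℝ) < 1/2)] with n hn
  have hnn : (0:ℝ) ≤ ‖x * y‖ ^ n * ‖q‖ ^ (n ^ 2) :=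
    mul_nonneg (pow_nonneg (norm_nonneg _) _) (pow_nonneg (norm_nonneg _) _)
  have hnn1 : (0:ℝ) ≤ ‖x * y‖ ^ (n+1) * ‖q‖ ^ ((n+1) ^ 2) :=
    mul_nonneg (pow_nonneg (norm_nonneg _) _) (pow_nonneg (norm_nonneg _) _)
  rw [Real.norm_of_nonneg hnn1, Real.norm_of_nonneg hnn]
  have hdec : ‖x * y‖ * ‖q‖ ^ (2 * n + 1) ≤ 1 / 2 := by
    refine le_trans ?_ hn
    exact mul_le_mul_of_nonneg_left
      (pow_le_pow_of_le_one (norm_nonneg q) hq.le (by omega)) (norm_nonneg _)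
  have hexp : ‖x * y‖ ^ (n+1) * ‖q‖ ^ ((n+1) ^ 2)
      = (‖x * y‖ ^ n * ‖q‖ ^ (n ^ 2)) * (‖x * y‖ * ‖q‖ ^ (2 * n + 1)) := by
    rw [show (n+1) ^ 2 = n ^ 2 + (2 * n + 1) from by ring, pow_add, pow_succ]
    ring
  rw [hexp]
  nlinarith [hnn, hdec, mul_nonneg (norm_nonneg (x*y)) (pow_nonneg (norm_nonneg q) (2*n+1))]

lemma sumG (x y q : ℂ) (hq : ‖q‖ < 1) {cx cy : ℝ} (hcx0 : 0 < cx) (hcy0 : 0 < cy)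
    (hcx : ∀ n, cx ≤ ‖qPoch (x * q) q n‖) (hcy : ∀ n, cy ≤ ‖qPoch (y * q) q n‖) :
    Summable fun n : ℕ =>
      (x * y) ^ n * q ^ (n ^ 2) / (qPoch (x * q) q n * qPoch (y * q) q n) := by
  apply Summable.of_norm_bounded (g := fun n => ‖x * y‖ ^ n * ‖q‖ ^ (n ^ 2) / (cx * cy))
    ((sumAux x y q hq).div_const _)
  intro n
  have h0x : 0 < ‖qPoch (x * q) q n‖ := lt_of_lt_of_le hcx0 (hcx n)
  have h0y : 0 < ‖qPoch (y * q) q n‖ := lt_of_lt_of_le hcy0 (hcy n)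
  have hd : ‖qPoch (x * q) q n * qPoch (y * q) q n‖
      = ‖qPoch (x * q) q n‖ * ‖qPoch (y * q) q n‖ := norm_mul _ _
  rw [norm_div, hd, div_le_div_iff₀ (mul_pos h0x h0y) (mul_pos hcx0 hcy0), norm_mul, norm_pow,
    norm_pow]
  have hnum : (0:ℝ) ≤ ‖x * y‖ ^ n * ‖q‖ ^ (n ^ 2) :=
    mul_nonneg (pow_nonneg (norm_nonneg _) _) (pow_nonneg (norm_nonneg _) _)
  exact mul_le_mul_of_nonneg_left
    (mul_le_mul (hcx n) (hcy n) hcy0.le (norm_nonneg _)) hnum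


lemma lower_bound' (x q : ℂ) (hq : ‖q‖ < 1) (hx : ∀ m : ℕ, x * q ^ (m + 1) ≠ 1) :
    ∃ c > 0, ∀ s n : ℕ, c ≤ ‖qPoch (x * q ^ s * q) q n‖ := by
  obtain ⟨c, hc0, hc⟩ := lower_bound x q hq hx
  refine ⟨c, hc0, fun s n => ?_⟩
  have he : qPoch (x * q ^ s * q) q n = ∏ j ∈ Finset.range n, (1 - x * q ^ (s + 1 + j)) :=
    Finset.prod_congr rfl fun j _ => by rw [pow_add, pow_add, pow_one]; ring
  rw [he]; exact hc s n

lemma step (x y q : ℂ) (hq : ‖q‖ < 1) (hy : ‖y‖ < 1)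
    (hx : ∀ m : ℕ, x * q ^ (m + 1) ≠ 1) :
    (1 - y) * Fs x y q - Gs x y q
      = (x * y * q / ((1 - x * q) * (1 - y * q)))
        * ((1 - y * q) * Fs (x * q) (y * q) q - Gs (x * q) (y * q) q) := by
  have hqle : ∀ m : ℕ, ‖q‖ ^ m ≤ 1 := fun m => pow_le_one₀ (norm_nonneg q) hq.le
  have hy' : ∀ m : ℕ, y * q ^ (m + 1) ≠ 1 := by
    intro m h
    have h1 : ‖y * q ^ (m + 1)‖ < 1 := by
      rw [norm_mul, norm_pow]
      calc ‖y‖ * ‖q‖ ^ (m + 1) ≤ ‖y‖ * 1 :=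
            mul_le_mul_of_nonneg_left (hqle (m + 1)) (norm_nonneg y)
        _ = ‖y‖ := mul_one _
        _ < 1 := hy
    rw [h] at h1; simp at h1
  have hyq : ‖y * q‖ < 1 := by
    rw [norm_mul]
    calc ‖y‖ * ‖q‖ ≤ ‖y‖ * 1 := mul_le_mul_of_nonneg_left (by simpa using hqle 1) (norm_nonneg y)
      _ = ‖y‖ := mul_one _
      _ < 1 := hy
  obtain ⟨cx, hcx0, hcx⟩ := lower_bound' x q hq hx
  obtain ⟨cy, hcy0, hcy⟩ := lower_bound' y q hq hy'
  have hcx0' : ∀ n, cx ≤ ‖qPoch (x * q) q n‖ := fun n => by simpa using hcx 0 n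
  have hcx1' : ∀ n, cx ≤ ‖qPoch ((x * q) * q) q n‖ := fun n => by simpa [pow_one] using hcx 1 n
  have hcy0' : ∀ n, cy ≤ ‖qPoch (y * q) q n‖ := fun n => by simpa using hcy 0 n
  have hcy1' : ∀ n, cy ≤ ‖qPoch ((y * q) * q) q n‖ := fun n => by simpa [pow_one] using hcy 1 n
  have hPx : ∀ n, qPoch (x * q) q n ≠ 0 :=
    fun n => norm_pos_iff.mp (lt_of_lt_of_le hcx0 (hcx0' n))
  have hPx2 : ∀ n, qPoch ((x * q) * q) q n ≠ 0 :=
    fun n => norm_pos_iff.mp (lt_of_lt_of_le hcx0 (hcx1' n))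
  have hPy2 : ∀ n, qPoch ((y * q) * q) q n ≠ 0 :=
    fun n => norm_pos_iff.mp (lt_of_lt_of_le hcy0 (hcy1' n))
  have h1x : (1 : ℂ) - x * q ≠ 0 := by
    have := hx 0
    rw [pow_one] at this
    exact sub_ne_zero.mpr fun h => this h.symm
  have h1y : (1 : ℂ) - y * q ≠ 0 := by
    have := hy' 0
    rw [pow_one] at this
    exact sub_ne_zero.mpr fun h => this h.symm
  have hF : Summable fun n : ℕ => y ^ n / qPoch (x * q) q n := sumF x y q hy hcx0 hcx0'
  have hG : Summable fun n : ℕ =>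
      (x * y) ^ n * q ^ (n ^ 2) / (qPoch (x * q) q n * qPoch (y * q) q n) :=
    sumG x y q hq hcx0 hcy0 hcx0' hcy0'
  -- F part
  have hshift : Summable fun n : ℕ => y ^ (n + 1) / qPoch (x * q) q (n + 1) :=
    (summable_nat_add_iff 1).mpr hF
  have hg2 : Summable fun n : ℕ => y ^ (n + 1) / qPoch (x * q) q n :=
    (hF.mul_left y).congr fun n => by rw [pow_succ]; ring
  have e1 : Fs x y q = 1 + ∑' n : ℕ, y ^ (n + 1) / qPoch (x * q) q (n + 1) := by
    rw [Fs, Summable.tsum_eq_zero_add hF]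
    congr 1
    simp [qPoch]
  have e2 : y * Fs x y q = ∑' n : ℕ, y ^ (n + 1) / qPoch (x * q) q n := by
    rw [Fs, ← tsum_mul_left]
    exact tsum_congr fun n => by rw [pow_succ]; ring
  have eF : (1 - y) * Fs x y q = 1 + (x * y * q / (1 - x * q)) * Fs (x * q) (y * q) q := by
    rw [sub_mul, one_mul, e2, e1, add_sub_assoc, ← Summable.tsum_sub hshift hg2]
    congr 1
    rw [show (x * y * q / (1 - x * q)) * Fs (x * q) (y * q) q
        = ∑' n : ℕ, (x * y * q / (1 - x * q)) * ((y * q) ^ n / qPoch ((x * q) * q) q n) from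
      (tsum_mul_left).symm]
    apply tsum_congr
    intro n
    have hx1 : (1 : ℂ) - x * q ^ (n + 1) ≠ 0 := sub_ne_zero.mpr fun h => hx n h.symm
    have hs : qPoch (x * q) q (n + 1) = qPoch (x * q) q n * (1 - x * q ^ (n + 1)) := by
      rw [qPoch_succ, pow_succ]; ring_nf
    have hs' : qPoch (x * q) q (n + 1) = (1 - x * q) * qPoch ((x * q) * q) q n :=
      qPoch_succ' (x * q) q n
    have key : y ^ (n + 1) / qPoch (x * q) q (n + 1) - y ^ (n + 1) / qPoch (x * q) q n
        = y ^ (n + 1) * (x * q ^ (n + 1)) / qPoch (x * q) q (n + 1) := by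
      rw [hs]
      field_simp [hPx n, hx1]
      ring
    rw [key, hs']
    field_simp [h1x, hPx2 n]
    ring
  -- G part
  have hGshift : Summable fun n : ℕ =>
      (x * y) ^ (n + 1) * q ^ ((n + 1) ^ 2)
        / (qPoch (x * q) q (n + 1) * qPoch (y * q) q (n + 1)) :=
    (summable_nat_add_iff 1).mpr hG
  have eG : Gs x y q = 1 + (x * y * q / ((1 - x * q) * (1 - y * q))) * Gs (x * q) (y * q) q := by
    rw [Gs, Summable.tsum_eq_zero_add hG]
    congr 1
    · simp [qPoch]
    rw [show (x * y * q / ((1 - x * q) * (1 - y * q))) * Gs (x * q) (y * q) q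
        = ∑' n : ℕ, (x * y * q / ((1 - x * q) * (1 - y * q)))
          * (((x * q) * (y * q)) ^ n * q ^ (n ^ 2)
            / (qPoch ((x * q) * q) q n * qPoch ((y * q) * q) q n)) from
      (tsum_mul_left).symm]
    apply tsum_congr
    intro n
    rw [qPoch_succ' (x * q) q n, qPoch_succ' (y * q) q n,
      show (n + 1) ^ 2 = n ^ 2 + (2 * n + 1) from by ring, pow_add]
    field_simp [h1x, h1y, hPx2 n, hPy2 n]
    ring
  have hcoef : x * y * q / (1 - x * q)
      = (x * y * q / ((1 - x * q) * (1 - y * q))) * (1 - y * q) := by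
    field_simp
  rw [eF, eG, hcoef]
  ring



end Fine123

open Fine123 Filter in
theorem fine_12_3 (b t q : ℂ) (hq : ‖q‖ < 1) (ht : ‖t‖ < 1)
    (hb : ∀ m : ℕ, b ≠ (q ^ (m + 1))⁻¹) :
    (1 - t) * ∑' n : ℕ, t ^ n / qPoch (b * q) q n
      = ∑' n : ℕ, (b * t) ^ n * q ^ (n ^ 2) / (qPoch (b * q) q n * qPoch (t * q) q n) := by
  have hqle : ∀ m : ℕ, ‖q‖ ^ m ≤ 1 := fun m => pow_le_one₀ (norm_nonneg q) hq.le
  have hb' : ∀ m : ℕ, b * q ^ (m + 1) ≠ 1 := by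
    intro m h
    exact hb m (eq_inv_of_mul_eq_one_left h)
  have ht' : ∀ m : ℕ, t * q ^ (m + 1) ≠ 1 := by
    intro m h
    have h1 : ‖t * q ^ (m + 1)‖ < 1 := by
      rw [norm_mul, norm_pow]
      calc ‖t‖ * ‖q‖ ^ (m + 1) ≤ ‖t‖ * 1 :=
            mul_le_mul_of_nonneg_left (hqle (m + 1)) (norm_nonneg t)
        _ = ‖t‖ := mul_one _
        _ < 1 := ht
    rw [h] at h1; simp at h1
  have htK' : ∀ K : ℕ, ‖t * q ^ K‖ ≤ ‖t‖ := by
    intro K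
    rw [norm_mul, norm_pow]
    calc ‖t‖ * ‖q‖ ^ K ≤ ‖t‖ * 1 := mul_le_mul_of_nonneg_left (hqle K) (norm_nonneg t)
      _ = ‖t‖ := mul_one _
  have htK : ∀ K : ℕ, ‖t * q ^ K‖ < 1 := by
    intro K
    rw [norm_mul, norm_pow]
    calc ‖t‖ * ‖q‖ ^ K ≤ ‖t‖ * 1 := mul_le_mul_of_nonneg_left (hqle K) (norm_nonneg t)
      _ = ‖t‖ := mul_one _
      _ < 1 := ht
  have hbK : ∀ K m : ℕ, (b * q ^ K) * q ^ (m + 1) ≠ 1 := by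
    intro K m h
    apply hb' (K + m)
    rw [show K + m + 1 = K + (m + 1) from by ring, pow_add]
    linear_combination h
  set d : ℕ → ℂ := fun K =>
    (1 - t * q ^ K) * Fs (b * q ^ K) (t * q ^ K) q - Gs (b * q ^ K) (t * q ^ K) q with hd
  set rr : ℕ → ℂ := fun k =>
    b * q ^ k * (t * q ^ k) * q / ((1 - b * q ^ (k + 1)) * (1 - t * q ^ (k + 1))) with hrr
  have hstep : ∀ K : ℕ, d K = rr K * d (K + 1) := by
    intro K
    have h := step (b * q ^ K) (t * q ^ K) q hq (htK K) (hbK K)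
    rw [show (b * q ^ K) * q = b * q ^ (K + 1) from by rw [pow_succ]; ring,
      show (t * q ^ K) * q = t * q ^ (K + 1) from by rw [pow_succ]; ring] at h
    exact h
  have hiter : ∀ K : ℕ, d 0 = (∏ k ∈ Finset.range K, rr k) * d K := by
    intro K
    induction K with
    | zero => simp
    | succ K ih => rw [ih, hstep K, Finset.prod_range_succ]; ring
  obtain ⟨cb, hcb0, hcb⟩ := lower_bound' b q hq hb'
  obtain ⟨ct, hct0, hct⟩ := lower_bound' t q hq ht'
  set MF : ℝ := ∑' n : ℕ, ‖t‖ ^ n / cb with hMF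
  set MG : ℝ := ∑' n : ℕ, ‖b * t‖ ^ n * ‖q‖ ^ (n ^ 2) / (cb * ct) with hMG
  have hsum_t : Summable fun n : ℕ => ‖t‖ ^ n / cb :=
    (summable_geometric_of_lt_one (norm_nonneg t) ht).div_const cb
  have hsum_G : Summable fun n : ℕ => ‖b * t‖ ^ n * ‖q‖ ^ (n ^ 2) / (cb * ct) :=
    (sumAux b t q hq).div_const _
  have hcbK : ∀ K n : ℕ, cb ≤ ‖qPoch (b * q ^ K * q) q n‖ := hcb
  have hFbound : ∀ K : ℕ, ‖Fs (b * q ^ K) (t * q ^ K) q‖ ≤ MF := by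
    intro K
    have hterm : ∀ n : ℕ, ‖(t * q ^ K) ^ n / qPoch ((b * q ^ K) * q) q n‖ ≤ ‖t‖ ^ n / cb := by
      intro n
      rw [norm_div, norm_pow]
      exact div_le_div₀ (pow_nonneg (norm_nonneg t) n)
        (pow_le_pow_left₀ (norm_nonneg _) (htK' K) n) hcb0 (hcb K n)
    have hsn : Summable fun n : ℕ => ‖(t * q ^ K) ^ n / qPoch ((b * q ^ K) * q) q n‖ :=
      Summable.of_nonneg_of_le (fun n => norm_nonneg _) hterm hsum_t
    exact le_trans (norm_tsum_le_tsum_norm hsn) (Summable.tsum_le_tsum hterm hsn hsum_t)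
  have hGbound : ∀ K : ℕ, ‖Gs (b * q ^ K) (t * q ^ K) q‖ ≤ MG := by
    intro K
    have hterm : ∀ n : ℕ,
        ‖(b * q ^ K * (t * q ^ K)) ^ n * q ^ (n ^ 2)
          / (qPoch ((b * q ^ K) * q) q n * qPoch ((t * q ^ K) * q) q n)‖
          ≤ ‖b * t‖ ^ n * ‖q‖ ^ (n ^ 2) / (cb * ct) := by
      intro n
      have hdenom : ‖qPoch ((b * q ^ K) * q) q n * qPoch ((t * q ^ K) * q) q n‖
          = ‖qPoch ((b * q ^ K) * q) q n‖ * ‖qPoch ((t * q ^ K) * q) q n‖ := norm_mul _ _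
      rw [norm_div, hdenom, norm_mul, norm_pow, norm_pow]
      have hnum1 : ‖b * q ^ K * (t * q ^ K)‖ ≤ ‖b * t‖ := by
        have he : ‖b * q ^ K * (t * q ^ K)‖ = ‖b * t‖ * (‖q‖ ^ K * ‖q‖ ^ K) := by
          rw [norm_mul, norm_mul, norm_mul, norm_mul, norm_pow]
          ring
        rw [he]
        calc ‖b * t‖ * (‖q‖ ^ K * ‖q‖ ^ K) ≤ ‖b * t‖ * 1 := by
              apply mul_le_mul_of_nonneg_left _ (norm_nonneg _)
              exact mul_le_one₀ (hqle K) (pow_nonneg (norm_nonneg q) K) (hqle K)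
          _ = ‖b * t‖ := mul_one _
      apply div_le_div₀ (mul_nonneg (pow_nonneg (norm_nonneg _) _) (pow_nonneg (norm_nonneg _) _))
        (mul_le_mul_of_nonneg_right (pow_le_pow_left₀ (norm_nonneg _) hnum1 n)
          (pow_nonneg (norm_nonneg q) _))
        (mul_pos hcb0 hct0)
        (mul_le_mul (hcb K n) (hct K n) hct0.le (norm_nonneg _))
    have hsn : Summable fun n : ℕ =>
        ‖(b * q ^ K * (t * q ^ K)) ^ n * q ^ (n ^ 2)
          / (qPoch ((b * q ^ K) * q) q n * qPoch ((t * q ^ K) * q) q n)‖ :=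
      Summable.of_nonneg_of_le (fun n => norm_nonneg _) hterm hsum_G
    exact le_trans (norm_tsum_le_tsum_norm hsn) (Summable.tsum_le_tsum hterm hsn hsum_G)
  have hMF0 : 0 ≤ MF := tsum_nonneg fun n => div_nonneg (pow_nonneg (norm_nonneg t) n) hcb0.le
  have hMG0 : 0 ≤ MG := tsum_nonneg fun n => div_nonneg
    (mul_nonneg (pow_nonneg (norm_nonneg _) _) (pow_nonneg (norm_nonneg _) _))
    (mul_pos hcb0 hct0).le
  set Mb : ℝ := (1 + ‖t‖) * MF + MG with hMb
  have hM : ∀ K : ℕ, ‖d K‖ ≤ Mb := by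
    intro K
    have h1 : ‖(1 : ℂ) - t * q ^ K‖ ≤ 1 + ‖t‖ := by
      calc ‖(1 : ℂ) - t * q ^ K‖ ≤ ‖(1 : ℂ)‖ + ‖t * q ^ K‖ := norm_sub_le _ _
        _ ≤ 1 + ‖t‖ := by
          rw [norm_one]
          exact add_le_add_right (htK' K) 1
    calc ‖d K‖ ≤ ‖(1 - t * q ^ K) * Fs (b * q ^ K) (t * q ^ K) q‖
        + ‖Gs (b * q ^ K) (t * q ^ K) q‖ := norm_sub_le _ _
      _ ≤ (1 + ‖t‖) * MF + MG := by
        rw [norm_mul]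
        exact add_le_add (mul_le_mul h1 (hFbound K) (norm_nonneg _)
          (by positivity)) (hGbound K)
  have hqk : Tendsto (fun k : ℕ => (q : ℂ) ^ k) atTop (nhds 0) :=
    tendsto_pow_atTop_nhds_zero_of_norm_lt_one hq
  have hqk1 : Tendsto (fun k : ℕ => (q : ℂ) ^ (k + 1)) atTop (nhds 0) :=
    hqk.comp (tendsto_add_atTop_nat 1)
  have hrtend : Tendsto rr atTop (nhds 0) := by
    have hnum : Tendsto (fun k : ℕ => b * q ^ k * (t * q ^ k) * q) atTop (nhds 0) := by
      have := ((hqk.const_mul b).mul (hqk.const_mul t)).mul_const q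
      simpa using this
    have hden : Tendsto (fun k : ℕ => (1 - b * q ^ (k + 1)) * (1 - t * q ^ (k + 1)))
        atTop (nhds 1) := by
      have h1 : Tendsto (fun k : ℕ => (1 : ℂ) - b * q ^ (k + 1)) atTop (nhds 1) := by
        simpa using tendsto_const_nhds.sub (hqk1.const_mul b)
      have h2 : Tendsto (fun k : ℕ => (1 : ℂ) - t * q ^ (k + 1)) atTop (nhds 1) := by
        simpa using tendsto_const_nhds.sub (hqk1.const_mul t)
      simpa using h1.mul h2
    have := hnum.div hden (one_ne_zero)
    rw [zero_div] at this; exact this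
  have hrn : Tendsto (fun k => ‖rr k‖) atTop (nhds 0) := by
    simpa using hrtend.norm
  obtain ⟨k₀, hk₀⟩ : ∃ k₀ : ℕ, ∀ k ≥ k₀, ‖rr k‖ ≤ 1 / 2 :=
    eventually_atTop.mp (hrn.eventually_le_const (by norm_num : (0:ℝ) < 1/2))
  set u : ℕ → ℝ := fun K => ∏ k ∈ Finset.range K, ‖rr k‖ with hu
  have hu0 : ∀ K, 0 ≤ u K := fun K => Finset.prod_nonneg fun k _ => norm_nonneg _
  have hukey : ∀ j : ℕ, u (k₀ + j) ≤ u k₀ * (1 / 2) ^ j := by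
    intro j
    induction j with
    | zero => simp
    | succ j ih =>
      have heq : u (k₀ + (j + 1)) = u (k₀ + j) * ‖rr (k₀ + j)‖ :=
        Finset.prod_range_succ _ _
      rw [heq]
      calc u (k₀ + j) * ‖rr (k₀ + j)‖ ≤ (u k₀ * (1/2) ^ j) * (1/2) := by
            apply mul_le_mul ih (hk₀ _ (Nat.le_add_right _ _)) (norm_nonneg _)
            positivity
        _ = u k₀ * (1/2) ^ (j + 1) := by ring
  have hutend : Tendsto u atTop (nhds 0) := by
    have h2 : Tendsto (fun j : ℕ => u k₀ * (1/2 : ℝ) ^ j) atTop (nhds 0) := by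
      simpa using (tendsto_pow_atTop_nhds_zero_of_lt_one (by norm_num : (0:ℝ) ≤ 1/2)
        (by norm_num : (1/2 : ℝ) < 1)).const_mul (u k₀)
    have h3 : Tendsto (fun j => u (k₀ + j)) atTop (nhds 0) :=
      squeeze_zero (fun j => hu0 _) hukey h2
    have h4 : Tendsto (fun j => u (j + k₀)) atTop (nhds 0) := by
      simpa [add_comm] using h3
    exact (tendsto_add_atTop_iff_nat k₀).mp h4
  have hd0 : ‖d 0‖ ≤ 0 := by
    have hball : ∀ K : ℕ, ‖d 0‖ ≤ u K * Mb := by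
      intro K
      rw [hiter K, norm_mul]
      have : ‖∏ k ∈ Finset.range K, rr k‖ = u K := by
        rw [hu, norm_prod]
      rw [this]
      exact mul_le_mul_of_nonneg_left (hM K) (hu0 K)
    have hmt : Tendsto (fun K => u K * Mb) atTop (nhds 0) := by
      simpa using hutend.mul_const Mb
    exact ge_of_tendsto' hmt hball
  have hfin : d 0 = 0 := norm_le_zero_iff.mp hd0
  simp only [hd, pow_zero, mul_one] at hfin
  exact sub_eq_zero.mp hfin
end

section
/- For |q|<1 and |a|<1, (1−a) F(a,−a;a) = 1 + 2 ∑_{n≥1} (−1)^n a^{2n} q^{n²}, where F(a,b;t) := ∑_{n≥0} (aq;q)_n/(bq;q)_n · t^n. -/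
namespace Fine1431

open Finset Filter Topology

lemma qPoch_zero (a q : ℂ) : qPoch a q 0 = 1 := by simp [qPoch]

lemma qPoch_one (a q : ℂ) : qPoch a q 1 = 1 - a := by simp [qPoch]

lemma qPoch_succ (a q : ℂ) (n : ℕ) : qPoch a q (n + 1) = qPoch a q n * (1 - a * q ^ n) :=
  Finset.prod_range_succ _ _

lemma qPoch_succ' (a q : ℂ) (n : ℕ) : qPoch a q (n + 1) = (1 - a) * qPoch (a * q) q n := by
  rw [qPoch, Finset.prod_range_succ']
  have h : ∀ j : ℕ, 1 - a * q ^ (j + 1) = 1 - a * q * q ^ j := fun j => by ring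
  simp only [h, pow_zero, mul_one]
  rw [qPoch, mul_comm]

lemma one_sub_ne_zero {x : ℂ} (hx : ‖x‖ < 1) : (1 : ℂ) - x ≠ 0 := by
  intro h
  rw [sub_eq_zero] at h
  rw [← h] at hx
  simp at hx

lemma norm_mul_pow_lt {x q : ℂ} (hx : ‖x‖ < 1) (hq : ‖q‖ < 1) (j : ℕ) : ‖x * q ^ j‖ < 1 := by
  rw [norm_mul, norm_pow]
  calc ‖x‖ * ‖q‖ ^ j ≤ ‖x‖ * 1 :=
        mul_le_mul_of_nonneg_left (pow_le_one₀ (norm_nonneg q) hq.le) (norm_nonneg x)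
    _ < 1 := by simpa using hx

lemma qPoch_ne_zero {x q : ℂ} (hx : ‖x‖ < 1) (hq : ‖q‖ < 1) (n : ℕ) : qPoch x q n ≠ 0 := by
  refine Finset.prod_ne_zero_iff.mpr fun j _ => one_sub_ne_zero (norm_mul_pow_lt hx hq j)

lemma geom_partial_le {r : ℝ} (h0 : 0 ≤ r) (h1 : r < 1) (n : ℕ) :
    ∑ j ∈ Finset.range n, r ^ j ≤ (1 - r)⁻¹ := by
  have := Summable.sum_le_tsum (Finset.range n) (fun i _ => pow_nonneg h0 i)
    (summable_geometric_of_lt_one h0 h1)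
  rwa [tsum_geometric_of_lt_one h0 h1] at this

lemma qPoch_norm_le {x q : ℂ} {R : ℝ} (hx : ‖x‖ ≤ R) (hq : ‖q‖ < 1) (n : ℕ) :
    ‖qPoch x q n‖ ≤ Real.exp (R * (1 - ‖q‖)⁻¹) := by
  have hR : 0 ≤ R := le_trans (norm_nonneg x) hx
  calc ‖qPoch x q n‖ ≤ ∏ j ∈ Finset.range n, ‖1 - x * q ^ j‖ := norm_prod_le _ _
    _ ≤ ∏ j ∈ Finset.range n, Real.exp (R * ‖q‖ ^ j) := by
        refine Finset.prod_le_prod (fun j _ => norm_nonneg _) fun j _ => ?_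
        have h1 : ‖(1 : ℂ) - x * q ^ j‖ ≤ 1 + R * ‖q‖ ^ j := by
          calc ‖(1 : ℂ) - x * q ^ j‖ ≤ ‖(1 : ℂ)‖ + ‖x * q ^ j‖ := norm_sub_le _ _
            _ ≤ 1 + R * ‖q‖ ^ j := by
                rw [norm_one, norm_mul, norm_pow]
                have : ‖x‖ * ‖q‖ ^ j ≤ R * ‖q‖ ^ j :=
                  mul_le_mul_of_nonneg_right hx (pow_nonneg (norm_nonneg q) j)
                linarith
        have h2 := Real.add_one_le_exp (R * ‖q‖ ^ j)
        linarith
    _ = Real.exp (∑ j ∈ Finset.range n, R * ‖q‖ ^ j) := (Real.exp_sum _ _).symm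
    _ ≤ Real.exp (R * (1 - ‖q‖)⁻¹) := by
        apply Real.exp_le_exp.mpr
        rw [← Finset.mul_sum]
        exact mul_le_mul_of_nonneg_left (geom_partial_le (norm_nonneg q) hq n) hR

lemma exp_le_one_sub {t R : ℝ} (h0 : 0 ≤ t) (htR : t ≤ R) (hR : R < 1) :
    Real.exp (-(t * (1 - R)⁻¹)) ≤ 1 - t := by
  have hR1 : (0 : ℝ) < 1 - R := by linarith
  have ht1 : (0 : ℝ) < 1 - t := by linarith
  have hinvpos : 0 < (1 - R)⁻¹ := inv_pos.mpr hR1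
  have h1 : 1 + t * (1 - R)⁻¹ ≤ Real.exp (t * (1 - R)⁻¹) := by
    have := Real.add_one_le_exp (t * (1 - R)⁻¹); linarith
  have h5 : 1 ≤ (1 - t) * (1 - R)⁻¹ := by
    have h := mul_le_mul_of_nonneg_right (show 1 - R ≤ 1 - t by linarith) hinvpos.le
    rwa [mul_inv_cancel₀ hR1.ne'] at h
  have h2 : (1 - t)⁻¹ ≤ 1 + t * (1 - R)⁻¹ := by
    rw [inv_le_iff_one_le_mul₀ ht1]
    nlinarith [mul_le_mul_of_nonneg_left h5 h0]
  have h3 : (1 - t)⁻¹ ≤ Real.exp (t * (1 - R)⁻¹) := le_trans h2 h1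
  rw [Real.exp_neg]
  calc (Real.exp (t * (1 - R)⁻¹))⁻¹ ≤ ((1 - t)⁻¹)⁻¹ := inv_anti₀ (inv_pos.mpr ht1) h3
    _ = 1 - t := inv_inv _

lemma qPoch_norm_ge {x q : ℂ} {R : ℝ} (hx : ‖x‖ ≤ R) (hR : R < 1) (hq : ‖q‖ < 1) (n : ℕ) :
    Real.exp (-(R * (1 - ‖q‖)⁻¹ * (1 - R)⁻¹)) ≤ ‖qPoch x q n‖ := by
  have h0R : 0 ≤ R := le_trans (norm_nonneg x) hx
  have hR1 : (0 : ℝ) < 1 - R := by linarith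
  have hqn : ∀ j : ℕ, ‖x‖ * ‖q‖ ^ j ≤ R := fun j => by
    calc ‖x‖ * ‖q‖ ^ j ≤ R * 1 :=
          mul_le_mul hx (pow_le_one₀ (norm_nonneg q) hq.le) (pow_nonneg (norm_nonneg q) j) h0R
      _ = R := mul_one R
  have hsum : (∑ j ∈ Finset.range n, -(‖x‖ * ‖q‖ ^ j * (1 - R)⁻¹))
      = -((∑ j ∈ Finset.range n, ‖x‖ * ‖q‖ ^ j) * (1 - R)⁻¹) := by
    rw [Finset.sum_neg_distrib, Finset.sum_mul]
  rw [qPoch, norm_prod]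
  calc Real.exp (-(R * (1 - ‖q‖)⁻¹ * (1 - R)⁻¹))
      ≤ Real.exp (∑ j ∈ Finset.range n, -(‖x‖ * ‖q‖ ^ j * (1 - R)⁻¹)) := by
        apply Real.exp_le_exp.mpr
        rw [hsum]
        apply neg_le_neg
        apply mul_le_mul_of_nonneg_right _ (inv_nonneg.mpr hR1.le)
        rw [← Finset.mul_sum]
        exact mul_le_mul hx (geom_partial_le (norm_nonneg q) hq n)
          (Finset.sum_nonneg fun i _ => pow_nonneg (norm_nonneg q) i) h0R
    _ = ∏ j ∈ Finset.range n, Real.exp (-(‖x‖ * ‖q‖ ^ j * (1 - R)⁻¹)) := Real.exp_sum _ _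
    _ ≤ ∏ j ∈ Finset.range n, ‖1 - x * q ^ j‖ := by
        refine Finset.prod_le_prod (fun j _ => (Real.exp_pos _).le) fun j _ => ?_
        have h1 : Real.exp (-(‖x‖ * ‖q‖ ^ j * (1 - R)⁻¹)) ≤ 1 - ‖x‖ * ‖q‖ ^ j :=
          exp_le_one_sub (mul_nonneg (norm_nonneg x) (pow_nonneg (norm_nonneg q) j))
            (hqn j) hR
        have h2 : 1 - ‖x * q ^ j‖ ≤ ‖1 - x * q ^ j‖ := by
          have := norm_sub_norm_le (1 : ℂ) (x * q ^ j)
          simpa using this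
        rw [norm_mul, norm_pow] at h2
        linarith

/-- the iterated series -/
noncomputable def uu (a q : ℂ) (k n : ℕ) : ℂ :=
  a ^ n * (q ^ k) ^ n * qPoch (a * q ^ k) q n / qPoch (-(a * q ^ k)) q (n + 1)

/-- the telescoping certificate -/
noncomputable def gg (a q : ℂ) (k n : ℕ) : ℂ :=
  uu a q k n * (1 - a ^ 2 * (q ^ k) ^ 2 * q ^ n) / (1 - a * q ^ k)

section main

variable {a q : ℂ} (hq : ‖q‖ < 1) (ha : ‖a‖ < 1)

include hq ha

lemma norm_aqk_lt (k : ℕ) : ‖a * q ^ k‖ < 1 :=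
  norm_mul_pow_lt ha hq k

lemma hD_ne (k m : ℕ) : qPoch (-(a * q ^ k)) q m ≠ 0 :=
  qPoch_ne_zero (by rw [norm_neg]; exact norm_aqk_lt hq ha k) hq m

lemma h1p_ne (k : ℕ) : (1 : ℂ) - -(a * q ^ k) ≠ 0 :=
  one_sub_ne_zero (by rw [norm_neg]; exact norm_aqk_lt hq ha k)

lemma h1m_ne (k : ℕ) : (1 : ℂ) - a * q ^ k ≠ 0 :=
  one_sub_ne_zero (norm_aqk_lt hq ha k)

lemma hfac_ne (k j : ℕ) : (1 : ℂ) - -(a * q ^ k) * q ^ j ≠ 0 :=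
  one_sub_ne_zero (by
    rw [neg_mul, norm_neg]
    exact norm_mul_pow_lt (norm_aqk_lt hq ha k) hq j)

lemma hfacp_ne (k j : ℕ) : (1 : ℂ) - a * q ^ k * q ^ j ≠ 0 :=
  one_sub_ne_zero (norm_mul_pow_lt (norm_aqk_lt hq ha k) hq j)

/-- certificate identity -/
lemma key (k n : ℕ) :
    uu a q k n + a ^ 2 * ((q ^ k) ^ 2 * q) * uu a q (k + 1) n
      = gg a q k n - gg a q k (n + 1) := by
  have hU : (1 - a * q ^ k) * qPoch (a * q ^ (k + 1)) q n
      = qPoch (a * q ^ k) q n * (1 - a * q ^ k * q ^ n) := by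
    have e1 := qPoch_succ' (a * q ^ k) q n
    rw [show a * q ^ k * q = a * q ^ (k + 1) from by ring] at e1
    rw [← e1, qPoch_succ]
  have hV : (1 - -(a * q ^ k)) * qPoch (-(a * q ^ (k + 1))) q (n + 1)
      = qPoch (-(a * q ^ k)) q (n + 1) * (1 - -(a * q ^ k) * q ^ (n + 1)) := by
    have e1 := qPoch_succ' (-(a * q ^ k)) q (n + 1)
    rw [show -(a * q ^ k) * q = -(a * q ^ (k + 1)) from by ring] at e1
    rw [← e1, qPoch_succ]
  have hVne : qPoch (-(a * q ^ (k + 1))) q (n + 1) ≠ 0 := hD_ne hq ha (k + 1) (n + 1)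
  have hDne : qPoch (-(a * q ^ k)) q (n + 1) ≠ 0 := hD_ne hq ha k (n + 1)
  have hm := h1m_ne hq ha k
  have hp := h1p_ne hq ha k
  have hf := hfac_ne hq ha k (n + 1)
  set P := qPoch (a * q ^ k) q n with hPdef
  set D := qPoch (-(a * q ^ k)) q (n + 1) with hDdef
  have hCD : (1 - a * q ^ k) * (D * (1 - -(a * q ^ k) * q ^ (n + 1))) ≠ 0 :=
    mul_ne_zero hm (mul_ne_zero hDne hf)
  have hUV : qPoch (a * q ^ (k + 1)) q n / qPoch (-(a * q ^ (k + 1))) q (n + 1)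
      = P * (1 - a * q ^ k * q ^ n) * (1 - -(a * q ^ k))
        / ((1 - a * q ^ k) * (D * (1 - -(a * q ^ k) * q ^ (n + 1)))) := by
    rw [div_eq_div_iff hVne hCD]
    linear_combination (D * (1 - -(a * q ^ k) * q ^ (n + 1))) * hU
      - (P * (1 - a * q ^ k * q ^ n)) * hV
  have L1 : uu a q k n
      = a ^ n * (q ^ k) ^ n * P * ((1 - a * q ^ k) * (1 - -(a * q ^ k) * q ^ (n + 1)))
        / ((1 - a * q ^ k) * (D * (1 - -(a * q ^ k) * q ^ (n + 1)))) := by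
    rw [uu, ← hPdef, ← hDdef, div_eq_div_iff hDne hCD]
    ring
  have L2 : a ^ 2 * ((q ^ k) ^ 2 * q) * uu a q (k + 1) n
      = a ^ 2 * ((q ^ k) ^ 2 * q) * (a ^ n * (q ^ (k + 1)) ^ n
          * (P * (1 - a * q ^ k * q ^ n) * (1 - -(a * q ^ k))))
        / ((1 - a * q ^ k) * (D * (1 - -(a * q ^ k) * q ^ (n + 1)))) := by
    rw [uu, mul_div_assoc, hUV, mul_div_assoc', mul_div_assoc']
  have L3 : gg a q k n
      = a ^ n * (q ^ k) ^ n * P * (1 - a ^ 2 * (q ^ k) ^ 2 * q ^ n)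
          * (1 - -(a * q ^ k) * q ^ (n + 1))
        / ((1 - a * q ^ k) * (D * (1 - -(a * q ^ k) * q ^ (n + 1)))) := by
    rw [gg, uu, ← hPdef, ← hDdef, div_eq_div_iff hm hCD, div_mul_eq_mul_div,
      div_mul_eq_mul_div, div_eq_iff hDne]
    ring
  have L4 : gg a q k (n + 1)
      = a ^ (n + 1) * (q ^ k) ^ (n + 1) * (P * (1 - a * q ^ k * q ^ n))
          * (1 - a ^ 2 * (q ^ k) ^ 2 * q ^ (n + 1))
        / ((1 - a * q ^ k) * (D * (1 - -(a * q ^ k) * q ^ (n + 1)))) := by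
    rw [gg, uu, qPoch_succ (a * q ^ k) q n, qPoch_succ (-(a * q ^ k)) q (n + 1),
      ← hPdef, ← hDdef, div_eq_div_iff hm hCD, div_mul_eq_mul_div,
      div_mul_eq_mul_div, div_eq_iff (mul_ne_zero hDne hf)]
    ring
  rw [L1, L2, L3, L4, ← add_div, div_sub_div_same]
  congr 1
  ring

lemma r_lt_one : ‖a‖ * ‖q‖ < 1 := by
  calc ‖a‖ * ‖q‖ ≤ ‖a‖ * 1 := mul_le_mul_of_nonneg_left hq.le (norm_nonneg a)
    _ < 1 := by simpa using ha

lemma norm_aqk_le (k : ℕ) (hk : 1 ≤ k) : ‖a * q ^ k‖ ≤ ‖a‖ * ‖q‖ := by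
  rw [norm_mul, norm_pow]
  apply mul_le_mul_of_nonneg_left _ (norm_nonneg a)
  calc ‖q‖ ^ k ≤ ‖q‖ ^ 1 := pow_le_pow_of_le_one (norm_nonneg q) hq.le hk
    _ = ‖q‖ := pow_one _

end main

/-- uniform constant -/
noncomputable def CC (a q : ℂ) : ℝ :=
  Real.exp (‖a‖ * ‖q‖ * (1 - ‖q‖)⁻¹)
    * (Real.exp (-(‖a‖ * ‖q‖ * (1 - ‖q‖)⁻¹ * (1 - ‖a‖ * ‖q‖)⁻¹)))⁻¹

lemma CC_pos (a q : ℂ) : 0 < CC a q :=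
  mul_pos (Real.exp_pos _) (inv_pos.mpr (Real.exp_pos _))

section main2

variable {a q : ℂ} (hq : ‖q‖ < 1) (ha : ‖a‖ < 1)

include hq ha

lemma norm_uu_le (k n : ℕ) (hk : 1 ≤ k) : ‖uu a q k n‖ ≤ CC a q * ‖a‖ ^ n := by
  have hxk := norm_aqk_le hq ha k hk
  have hr1 := r_lt_one hq ha
  have hnum := qPoch_norm_le hxk hq n
  have hden := qPoch_norm_ge (x := -(a * q ^ k)) (by rwa [norm_neg]) hr1 hq (n + 1)
  rw [uu, norm_div, norm_mul, norm_mul, norm_pow, norm_pow]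
  calc ‖a‖ ^ n * ‖q ^ k‖ ^ n * ‖qPoch (a * q ^ k) q n‖
        / ‖qPoch (-(a * q ^ k)) q (n + 1)‖
      ≤ ‖a‖ ^ n * 1 * Real.exp (‖a‖ * ‖q‖ * (1 - ‖q‖)⁻¹)
        / Real.exp (-(‖a‖ * ‖q‖ * (1 - ‖q‖)⁻¹ * (1 - ‖a‖ * ‖q‖)⁻¹)) := by
        gcongr
        · exact pow_le_one₀ (norm_nonneg _)
            (by rw [norm_pow]; exact pow_le_one₀ (norm_nonneg q) hq.le)
    _ = CC a q * ‖a‖ ^ n := by rw [CC]; ring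

lemma norm_c_le (n : ℕ) :
    ‖qPoch (a * q) q n / qPoch (-a * q) q n * a ^ n‖ ≤ CC a q * ‖a‖ ^ n := by
  have hxk : ‖a * q‖ ≤ ‖a‖ * ‖q‖ := by rw [norm_mul]
  have hr1 := r_lt_one hq ha
  have hnum := qPoch_norm_le hxk hq n
  have hden := qPoch_norm_ge (x := -(a * q)) (by rwa [norm_neg]) hr1 hq n
  rw [neg_mul, norm_mul, norm_div, norm_pow]
  calc ‖qPoch (a * q) q n‖ / ‖qPoch (-(a * q)) q n‖ * ‖a‖ ^ n
      ≤ Real.exp (‖a‖ * ‖q‖ * (1 - ‖q‖)⁻¹)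
        / Real.exp (-(‖a‖ * ‖q‖ * (1 - ‖q‖)⁻¹ * (1 - ‖a‖ * ‖q‖)⁻¹)) * ‖a‖ ^ n := by
        gcongr
    _ = CC a q * ‖a‖ ^ n := by rw [CC]; ring

lemma summable_uu (k : ℕ) (hk : 1 ≤ k) : Summable (fun n => uu a q k n) :=
  Summable.of_norm_bounded
    ((summable_geometric_of_lt_one (norm_nonneg a) ha).mul_left (CC a q))
    (fun n => norm_uu_le hq ha k n hk)

lemma summable_c :
    Summable (fun n => qPoch (a * q) q n / qPoch (-a * q) q n * a ^ n) :=
  Summable.of_norm_bounded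
    ((summable_geometric_of_lt_one (norm_nonneg a) ha).mul_left (CC a q))
    (fun n => norm_c_le hq ha n)

lemma norm_tsum_uu_le (k : ℕ) (hk : 1 ≤ k) :
    ‖∑' n, uu a q k n‖ ≤ CC a q * (1 - ‖a‖)⁻¹ := by
  have hgeo : Summable (fun n : ℕ => CC a q * ‖a‖ ^ n) :=
    (summable_geometric_of_lt_one (norm_nonneg a) ha).mul_left _
  have hnorm : Summable (fun n => ‖uu a q k n‖) :=
    Summable.of_nonneg_of_le (fun n => norm_nonneg _)
      (fun n => norm_uu_le hq ha k n hk) hgeo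
  calc ‖∑' n, uu a q k n‖ ≤ ∑' n, ‖uu a q k n‖ := norm_tsum_le_tsum_norm hnorm
    _ ≤ ∑' n : ℕ, CC a q * ‖a‖ ^ n :=
        Summable.tsum_le_tsum (fun n => norm_uu_le hq ha k n hk) hnorm hgeo
    _ = CC a q * (1 - ‖a‖)⁻¹ := by
        rw [tsum_mul_left, tsum_geometric_of_lt_one (norm_nonneg a) ha]

lemma gg_tendsto (k : ℕ) (hk : 1 ≤ k) :
    Filter.Tendsto (fun n => gg a q k n) Filter.atTop (nhds 0) := by
  have hmpos : 0 < ‖(1 : ℂ) - a * q ^ k‖ := norm_pos_iff.mpr (h1m_ne hq ha k)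
  refine squeeze_zero_norm
    (a := fun n => CC a q * 2 / ‖(1 : ℂ) - a * q ^ k‖ * ‖a‖ ^ n) (fun n => ?_) ?_
  · 
    rw [gg, norm_div, norm_mul]
    have h2 : ‖(1 : ℂ) - a ^ 2 * (q ^ k) ^ 2 * q ^ n‖ ≤ 2 := by
      calc ‖(1 : ℂ) - a ^ 2 * (q ^ k) ^ 2 * q ^ n‖
          ≤ ‖(1 : ℂ)‖ + ‖a ^ 2 * (q ^ k) ^ 2 * q ^ n‖ := norm_sub_le _ _
        _ ≤ 1 + 1 := by
            rw [norm_one]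
            apply add_le_add_right
            simp only [norm_mul, norm_pow]
            have e1 : ‖a‖ ^ 2 ≤ 1 := pow_le_one₀ (norm_nonneg a) ha.le
            have e2 : (‖q‖ ^ k) ^ 2 ≤ 1 := pow_le_one₀ (by positivity)
              (pow_le_one₀ (norm_nonneg q) hq.le)
            have e3 : ‖q‖ ^ n ≤ 1 := pow_le_one₀ (norm_nonneg q) hq.le
            have h0' : (0:ℝ) ≤ (‖q‖ ^ k) ^ 2 := by positivity
            exact mul_le_one₀ (mul_le_one₀ e1 h0' e2) (by positivity) e3
        _ = 2 := by norm_num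
    calc ‖uu a q k n‖ * ‖(1 : ℂ) - a ^ 2 * (q ^ k) ^ 2 * q ^ n‖ / ‖(1 : ℂ) - a * q ^ k‖
        ≤ CC a q * ‖a‖ ^ n * 2 / ‖(1 : ℂ) - a * q ^ k‖ := by
          gcongr <;> first
          | exact norm_uu_le hq ha k n hk
          | exact h2
          | exact mul_nonneg (CC_pos a q).le (by positivity)
          | positivity
    _ = CC a q * 2 / ‖(1 : ℂ) - a * q ^ k‖ * ‖a‖ ^ n := by ring
  · have := (tendsto_pow_atTop_nhds_zero_of_lt_one (norm_nonneg a) ha).const_mul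
      (CC a q * 2 / ‖(1 : ℂ) - a * q ^ k‖)
    simpa using this

lemma gg_zero (k : ℕ) : gg a q k 0 = 1 := by
  rw [gg, uu, qPoch_zero, qPoch_one]
  simp only [pow_zero, one_mul, mul_one]
  rw [div_eq_iff (h1m_ne hq ha k), one_mul, div_mul_eq_mul_div,
    div_eq_iff (h1p_ne hq ha k)]
  ring

lemma step (k : ℕ) (hk : 1 ≤ k) :
    ∑' n, uu a q k n = 1 - a ^ 2 * ((q ^ k) ^ 2 * q) * ∑' n, uu a q (k + 1) n := by
  have hs1 := summable_uu hq ha k hk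
  have hs2 := summable_uu hq ha (k + 1) (le_trans hk (Nat.le_succ k))
  have hpart : ∀ N, ∑ n ∈ Finset.range N,
      (uu a q k n + a ^ 2 * ((q ^ k) ^ 2 * q) * uu a q (k + 1) n)
      = gg a q k 0 - gg a q k N := by
    intro N
    rw [Finset.sum_congr rfl fun n _ => key hq ha k n]
    exact Finset.sum_range_sub' (gg a q k) N
  have t1 : Filter.Tendsto (fun N => ∑ n ∈ Finset.range N,
      (uu a q k n + a ^ 2 * ((q ^ k) ^ 2 * q) * uu a q (k + 1) n)) Filter.atTop
      (nhds ((∑' n, uu a q k n) + a ^ 2 * ((q ^ k) ^ 2 * q) * ∑' n, uu a q (k + 1) n)) :=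
    (hs1.hasSum.add (hs2.hasSum.mul_left _)).tendsto_sum_nat
  have t2 : Filter.Tendsto (fun N => gg a q k 0 - gg a q k N) Filter.atTop
      (nhds (gg a q k 0 - 0)) := tendsto_const_nhds.sub (gg_tendsto hq ha k hk)
  rw [funext hpart] at t1
  have h := tendsto_nhds_unique t1 t2
  rw [gg_zero hq ha k] at h
  linear_combination h

lemma keyA (n : ℕ) :
    (qPoch (a * q) q (n + 1) / qPoch (-a * q) q (n + 1) * a ^ (n + 1))
      - a * (qPoch (a * q) q n / qPoch (-a * q) q n * a ^ n)
      = -(2 * a ^ 2 * q) * uu a q 1 n := by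
  have hD : qPoch (-(a * q)) q n ≠ 0 := by
    have := hD_ne hq ha 1 n; rwa [pow_one] at this
  have hf : (1 : ℂ) - -(a * q) * q ^ n ≠ 0 := by
    have := hfac_ne hq ha 1 n; rwa [pow_one] at this
  have R1 : qPoch (a * q) q (n + 1) / qPoch (-a * q) q (n + 1) * a ^ (n + 1)
      = qPoch (a * q) q n * (1 - a * q * q ^ n) * a ^ (n + 1)
        / (qPoch (-(a * q)) q n * (1 - -(a * q) * q ^ n)) := by
    rw [neg_mul, qPoch_succ (a * q) q n, qPoch_succ (-(a * q)) q n, div_mul_eq_mul_div]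
  have R2 : a * (qPoch (a * q) q n / qPoch (-a * q) q n * a ^ n)
      = a * (qPoch (a * q) q n * a ^ n) * (1 - -(a * q) * q ^ n)
        / (qPoch (-(a * q)) q n * (1 - -(a * q) * q ^ n)) := by
    rw [neg_mul, div_mul_eq_mul_div, mul_div_assoc',
      div_eq_div_iff hD (mul_ne_zero hD hf)]
    ring
  have R3 : -(2 * a ^ 2 * q) * uu a q 1 n
      = -(2 * a ^ 2 * q) * (a ^ n * q ^ n * qPoch (a * q) q n)
        / (qPoch (-(a * q)) q n * (1 - -(a * q) * q ^ n)) := by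
    rw [uu, pow_one, qPoch_succ (-(a * q)) q n, mul_div_assoc']
  rw [R1, R2, R3, div_sub_div_same]
  congr 1
  ring

lemma stepA :
    (1 - a) * ∑' n : ℕ, qPoch (a * q) q n / qPoch (-a * q) q n * a ^ n
      = 1 - 2 * a ^ 2 * q * ∑' n, uu a q 1 n := by
  have hc := summable_c hq ha
  have hc1 : Summable (fun n => qPoch (a * q) q (n + 1) / qPoch (-a * q) q (n + 1)
      * a ^ (n + 1)) := by
    have := (summable_nat_add_iff 1).mpr hc
    exact this
  have hu1 := summable_uu hq ha 1 le_rfl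
  have hc0 : qPoch (a * q) q 0 / qPoch (-a * q) q 0 * a ^ 0 = 1 := by
    simp [qPoch_zero]
  have h1 : ∑' n, (qPoch (a * q) q (n + 1) / qPoch (-a * q) q (n + 1) * a ^ (n + 1))
      = (∑' n : ℕ, qPoch (a * q) q n / qPoch (-a * q) q n * a ^ n) - 1 := by
    rw [Summable.tsum_eq_zero_add hc, hc0]; ring
  have h2 : ∑' n, ((qPoch (a * q) q (n + 1) / qPoch (-a * q) q (n + 1) * a ^ (n + 1))
        - a * (qPoch (a * q) q n / qPoch (-a * q) q n * a ^ n))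
      = ((∑' n : ℕ, qPoch (a * q) q n / qPoch (-a * q) q n * a ^ n) - 1)
        - a * ∑' n : ℕ, qPoch (a * q) q n / qPoch (-a * q) q n * a ^ n := by
    rw [Summable.tsum_sub hc1 (hc.mul_left a), tsum_mul_left, h1]
  have h3 : ∑' n, ((qPoch (a * q) q (n + 1) / qPoch (-a * q) q (n + 1) * a ^ (n + 1))
        - a * (qPoch (a * q) q n / qPoch (-a * q) q n * a ^ n))
      = -(2 * a ^ 2 * q) * ∑' n, uu a q 1 n := by
    rw [tsum_congr (keyA hq ha), tsum_mul_left]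
  linear_combination h3 - h2

lemma iter (M : ℕ) :
    ∑' n, uu a q 1 n
      = (∑ m ∈ Finset.range M, (-1) ^ m * a ^ (2 * m) * q ^ (m ^ 2 + 2 * m))
        + (-1) ^ M * (a ^ (2 * M) * q ^ (M ^ 2 + 2 * M)) * ∑' n, uu a q (M + 1) n := by
  induction M with
  | zero => simp
  | succ M ih =>
    rw [ih, step hq ha (M + 1) (Nat.le_add_left 1 M), Finset.sum_range_succ]
    have e1 : a ^ (2 * (M + 1)) = a ^ (2 * M) * a ^ 2 := by
      rw [show 2 * (M + 1) = 2 * M + 2 from by ring, pow_add]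
    have e2 : q ^ ((M + 1) ^ 2 + 2 * (M + 1))
        = q ^ (M ^ 2 + 2 * M) * ((q ^ (M + 1)) ^ 2 * q) := by
      rw [show (q ^ (M + 1)) ^ 2 * q = q ^ ((M + 1) * 2 + 1) from by
        rw [← pow_mul, ← pow_succ], ← pow_add]
      congr 1
      ring
    rw [e1, e2, pow_succ (-1 : ℂ) M]
    ring

end main2

end Fine1431

open Fine1431 in
theorem fine_14_31 (a q : ℂ) (hq : ‖q‖ < 1) (ha : ‖a‖ < 1) :
    (1 - a) * ∑' n : ℕ, qPoch (a * q) q n / qPoch (-a * q) q n * a ^ n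
      = 1 + 2 * ∑' n : ℕ, (-1) ^ (n + 1) * a ^ (2 * (n + 1)) * q ^ ((n + 1) ^ 2) := by
  have htheta : Summable (fun n : ℕ => (-1 : ℂ) ^ (n + 1) * a ^ (2 * (n + 1)) * q ^ ((n + 1) ^ 2)) := by
    apply Summable.of_norm_bounded (summable_geometric_of_lt_one (norm_nonneg a) ha)
    intro n
    rw [norm_mul, norm_mul, norm_pow, norm_pow, norm_pow, norm_neg, norm_one, one_pow, one_mul]
    calc ‖a‖ ^ (2 * (n + 1)) * ‖q‖ ^ ((n + 1) ^ 2)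
        ≤ ‖a‖ ^ n * 1 := by
          apply mul_le_mul (pow_le_pow_of_le_one (norm_nonneg a) ha.le (by omega))
            (pow_le_one₀ (norm_nonneg q) hq.le) (by positivity) (by positivity)
      _ = ‖a‖ ^ n := mul_one _
  -- the identity for every partial stage M
  have hM : ∀ M : ℕ,
      (1 - a) * ∑' n : ℕ, qPoch (a * q) q n / qPoch (-a * q) q n * a ^ n
        = 1 + 2 * (∑ m ∈ Finset.range M, (-1) ^ (m + 1) * a ^ (2 * (m + 1)) * q ^ ((m + 1) ^ 2))
          + -(2 * a ^ 2 * q) * ((-1) ^ M * (a ^ (2 * M) * q ^ (M ^ 2 + 2 * M))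
              * ∑' n, uu a q (M + 1) n) := by
    intro M
    rw [stepA hq ha, iter hq ha M]
    have hterm : ∀ m : ℕ, (2 : ℂ) * ((-1) ^ (m + 1) * a ^ (2 * (m + 1)) * q ^ ((m + 1) ^ 2))
        = -(2 * a ^ 2 * q) * ((-1) ^ m * a ^ (2 * m) * q ^ (m ^ 2 + 2 * m)) := by
      intro m
      have ea : a ^ (2 * (m + 1)) = a ^ (2 * m) * a ^ 2 := by
        rw [show 2 * (m + 1) = 2 * m + 2 from by ring, pow_add]
      have eq' : q ^ ((m + 1) ^ 2) = q ^ (m ^ 2 + 2 * m) * q := by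
        rw [show (m + 1) ^ 2 = m ^ 2 + 2 * m + 1 from by ring, pow_add, pow_one]
      have em : (-1 : ℂ) ^ (m + 1) = (-1) ^ m * (-1) := pow_succ _ _
      rw [ea, eq', em]
      ring
    have hsums : (2 : ℂ) * ∑ m ∈ Finset.range M,
        (-1) ^ (m + 1) * a ^ (2 * (m + 1)) * q ^ ((m + 1) ^ 2)
        = -(2 * a ^ 2 * q) * ∑ m ∈ Finset.range M,
            (-1) ^ m * a ^ (2 * m) * q ^ (m ^ 2 + 2 * m) := by
      rw [Finset.mul_sum, Finset.mul_sum]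
      exact Finset.sum_congr rfl fun m _ => hterm m
    linear_combination -hsums
  -- limits
  have hrem : Filter.Tendsto (fun M => -(2 * a ^ 2 * q) * ((-1 : ℂ) ^ M
      * (a ^ (2 * M) * q ^ (M ^ 2 + 2 * M)) * ∑' n, uu a q (M + 1) n)) Filter.atTop (nhds 0) := by
    refine squeeze_zero_norm
      (a := fun M => 2 * ‖a‖ ^ 2 * ‖q‖ * (CC a q * (1 - ‖a‖)⁻¹) * ‖a‖ ^ M)
      (fun M => ?_) ?_
    · have hb := norm_tsum_uu_le hq ha (M + 1) (Nat.le_add_left 1 M)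
      show ‖-(2 * a ^ 2 * q) * ((-1 : ℂ) ^ M * (a ^ (2 * M) * q ^ (M ^ 2 + 2 * M))
          * ∑' n, uu a q (M + 1) n)‖
        ≤ 2 * ‖a‖ ^ 2 * ‖q‖ * (CC a q * (1 - ‖a‖)⁻¹) * ‖a‖ ^ M
      have e : ‖-(2 * a ^ 2 * q) * ((-1 : ℂ) ^ M * (a ^ (2 * M) * q ^ (M ^ 2 + 2 * M))
          * ∑' n, uu a q (M + 1) n)‖
          = 2 * ‖a‖ ^ 2 * ‖q‖ * (‖a‖ ^ (2 * M) * ‖q‖ ^ (M ^ 2 + 2 * M)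
            * ‖∑' n, uu a q (M + 1) n‖) := by
        simp only [norm_mul, norm_neg, norm_pow, norm_one, one_pow, RCLike.norm_two]
        ring
      rw [e]
      calc 2 * ‖a‖ ^ 2 * ‖q‖ * (‖a‖ ^ (2 * M) * ‖q‖ ^ (M ^ 2 + 2 * M) * ‖∑' n, uu a q (M + 1) n‖)
          ≤ 2 * ‖a‖ ^ 2 * ‖q‖ * (‖a‖ ^ M * 1 * (CC a q * (1 - ‖a‖)⁻¹)) := by
            apply mul_le_mul_of_nonneg_left _ (by positivity)
            have b1 : ‖a‖ ^ (2 * M) ≤ ‖a‖ ^ M :=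
              pow_le_pow_of_le_one (norm_nonneg a) ha.le (by omega)
            have b2 : ‖q‖ ^ (M ^ 2 + 2 * M) ≤ 1 := pow_le_one₀ (norm_nonneg q) hq.le
            exact mul_le_mul (mul_le_mul b1 b2 (by positivity) (by positivity)) hb
              (norm_nonneg _) (by positivity)
        _ = 2 * ‖a‖ ^ 2 * ‖q‖ * (CC a q * (1 - ‖a‖)⁻¹) * ‖a‖ ^ M := by ring
    · have := (tendsto_pow_atTop_nhds_zero_of_lt_one (norm_nonneg a) ha).const_mul
        (2 * ‖a‖ ^ 2 * ‖q‖ * (CC a q * (1 - ‖a‖)⁻¹))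
      simpa using this
  have hsumlim : Filter.Tendsto (fun M => ∑ m ∈ Finset.range M,
      (-1 : ℂ) ^ (m + 1) * a ^ (2 * (m + 1)) * q ^ ((m + 1) ^ 2)) Filter.atTop
      (nhds (∑' n : ℕ, (-1 : ℂ) ^ (n + 1) * a ^ (2 * (n + 1)) * q ^ ((n + 1) ^ 2))) :=
    htheta.hasSum.tendsto_sum_nat
  have hfull : Filter.Tendsto (fun M =>
      1 + 2 * (∑ m ∈ Finset.range M, (-1 : ℂ) ^ (m + 1) * a ^ (2 * (m + 1)) * q ^ ((m + 1) ^ 2))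
        + -(2 * a ^ 2 * q) * ((-1) ^ M * (a ^ (2 * M) * q ^ (M ^ 2 + 2 * M))
            * ∑' n, uu a q (M + 1) n)) Filter.atTop
      (nhds (1 + 2 * (∑' n : ℕ, (-1 : ℂ) ^ (n + 1) * a ^ (2 * (n + 1)) * q ^ ((n + 1) ^ 2)) + 0)) :=
    (tendsto_const_nhds.add (hsumlim.const_mul 2)).add hrem
  have hconst : Filter.Tendsto (fun _ : ℕ =>
      (1 - a) * ∑' n : ℕ, qPoch (a * q) q n / qPoch (-a * q) q n * a ^ n) Filter.atTop
      (nhds ((1 - a) * ∑' n : ℕ, qPoch (a * q) q n / qPoch (-a * q) q n * a ^ n)) :=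
    tendsto_const_nhds
  rw [funext hM] at hconst
  have := tendsto_nhds_unique hconst hfull
  rw [this]
  ring
end

section
/- For |q|<1 and any a, ∑_{n≥0} (−1)^n a^{2n} q^{n(n+1)/2} / (−aq;q)_n = ∑_{n≥0} a^{3n} q^{n(3n+1)/2} (1 − a² q^{2n+1}), provided −aq ≠ q^{-m} for all m. -/
namespace BY31
noncomputable def PP (a q : ℂ) (n : ℕ) : ℂ := qPoch (-a * q) q n

lemma PP_zero (a q : ℂ) : PP a q 0 = 1 := by simp [PP, qPoch]

lemma PP_succ (a q : ℂ) (n : ℕ) : PP a q (n + 1) = PP a q n * (1 + a * q ^ (n + 1)) := by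
  rw [PP, PP, qPoch, qPoch, Finset.prod_range_succ]
  rw [pow_succ]
  ring

noncomputable def SS (a q : ℂ) (N : ℕ) : ℂ :=
  ∑ k ∈ Finset.range (N + 1), (-1) ^ k * a ^ k * q ^ (k * (N + 1)) * PP a q k

lemma tele (a q : ℂ) (N : ℕ) :
    ∑ k ∈ Finset.range (N + 1),
      ((-1) ^ k * a ^ k * q ^ (k * (N + 1)) * PP a q k) *
        (1 + a * q ^ (N + 1) + a ^ 2 * q ^ (N + 2 + k))
      = (-1) ^ N * a ^ (N + 1) * q ^ ((N + 1) * (N + 1)) * PP a q (N + 1) + 1 := by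
  have h := Finset.sum_range_sub
    (fun k => (-1 : ℂ) ^ (k + 1) * a ^ k * q ^ (k * (N + 1)) * PP a q k) (N + 1)
  calc ∑ k ∈ Finset.range (N + 1),
      ((-1) ^ k * a ^ k * q ^ (k * (N + 1)) * PP a q k) *
        (1 + a * q ^ (N + 1) + a ^ 2 * q ^ (N + 2 + k))
      = ∑ k ∈ Finset.range (N + 1),
        ((fun k => (-1 : ℂ) ^ (k + 1) * a ^ k * q ^ (k * (N + 1)) * PP a q k) (k + 1)
          - (fun k => (-1 : ℂ) ^ (k + 1) * a ^ k * q ^ (k * (N + 1)) * PP a q k) k) := by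
        refine Finset.sum_congr rfl (fun k _ => ?_)
        simp only
        rw [PP_succ, show (k + 1) * (N + 1) = k * (N + 1) + (N + 1) by ring, pow_add,
          show N + 2 + k = (N + 1) + (k + 1) by ring, pow_add]
        ring
    _ = _ := by
        rw [h]
        simp only [PP_zero]
        rw [pow_succ, pow_succ]
        ring

lemma star (a q : ℂ) (N : ℕ) :
    (1 + a * q ^ (N + 1)) * SS a q N + a ^ 2 * q ^ (N + 2) * SS a q (N + 1)
      = 1 + (-1) ^ N * a ^ (N + 1) * q ^ ((N + 1) * (N + 1)) *
          (1 - a ^ 2 * q ^ (2 * N + 3)) * PP a q (N + 1) := by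
  have expand : SS a q (N + 1)
      = (∑ k ∈ Finset.range (N + 1), ((-1) ^ k * a ^ k * q ^ (k * (N + 1)) * PP a q k) * q ^ k)
        + (-1) ^ (N + 1) * a ^ (N + 1) * q ^ ((N + 1) * (N + 2)) * PP a q (N + 1) := by
    rw [SS, Finset.sum_range_succ]
    congr 1
    · refine Finset.sum_congr rfl (fun k _ => ?_)
      rw [show k * (N + 1 + 1) = k * (N + 1) + k by ring, pow_add]
      ring
    
  rw [expand, SS, Finset.mul_sum, mul_add, Finset.mul_sum, ← add_assoc,
    ← Finset.sum_add_distrib]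
  have step : ∑ k ∈ Finset.range (N + 1),
      ((1 + a * q ^ (N + 1)) * ((-1) ^ k * a ^ k * q ^ (k * (N + 1)) * PP a q k)
        + a ^ 2 * q ^ (N + 2) * (((-1) ^ k * a ^ k * q ^ (k * (N + 1)) * PP a q k) * q ^ k))
      = ∑ k ∈ Finset.range (N + 1),
        ((-1) ^ k * a ^ k * q ^ (k * (N + 1)) * PP a q k) *
          (1 + a * q ^ (N + 1) + a ^ 2 * q ^ (N + 2 + k)) := by
    refine Finset.sum_congr rfl (fun k _ => ?_)
    rw [show N + 2 + k = (N + 2) + k by ring, pow_add]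
    ring
  rw [step, tele]
  rw [show (N + 1) * (N + 2) = (N + 1) * (N + 1) + (N + 1) by ring, pow_add,
    show 2 * N + 3 = (N + 2) + (N + 1) by ring, pow_add, pow_succ]
  ring

-- exponent helpers
lemma eTri (n : ℕ) : (n + 1) * (n + 2) / 2 = n * (n + 1) / 2 + (n + 1) := by
  have hm : n * (n + 1) % 2 = 0 := Nat.even_iff.mp (Nat.even_mul_succ_self n)
  have h2 : (n + 1) * (n + 2) = n * (n + 1) + 2 * (n + 1) := by ring
  omega

lemma eTri3 (n : ℕ) : (n + 1) * (3 * (n + 1) + 1) / 2 = n * (3 * n + 1) / 2 + (3 * n + 2) := by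
  have hm : n * (3 * n + 1) % 2 = 0 := by
    have h := Nat.even_iff.mp (Nat.even_mul_succ_self n)
    have : n * (3 * n + 1) = n * (n + 1) + 2 * (n * n) := by ring
    omega
  have h2 : (n + 1) * (3 * (n + 1) + 1) = n * (3 * n + 1) + 2 * (3 * n + 2) := by ring
  omega

lemma eR (n : ℕ) : (n + 1) * (3 * (n + 1) + 1) / 2 = (n + 1) * (n + 2) / 2 + (n + 1) * (n + 1) := by
  have hm : (n + 1) * (n + 2) % 2 = 0 := by
    have h := Nat.even_iff.mp (Nat.even_mul_succ_self (n + 1))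
    have h' : (n + 1) * (n + 1 + 1) = (n + 1) * (n + 2) := by ring
    omega
  have h2 : (n + 1) * (3 * (n + 1) + 1) = (n + 1) * (n + 2) + 2 * ((n + 1) * (n + 1)) := by
    ring
  omega


noncomputable def tt (a q : ℂ) (n : ℕ) : ℂ :=
  (-1) ^ n * a ^ (2 * n) * q ^ (n * (n + 1) / 2) / PP a q n

noncomputable def rr (a q : ℂ) (n : ℕ) : ℂ :=
  a ^ (3 * n) * q ^ (n * (3 * n + 1) / 2) * (1 - a ^ 2 * q ^ (2 * n + 1))

noncomputable def RR (a q : ℂ) (N : ℕ) : ℂ :=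
  (-1) ^ N * a ^ (2 * N + 2) * q ^ ((N + 1) * (N + 2) / 2) * SS a q N / PP a q N

lemma PP_ne (a q : ℂ) (hfac : ∀ j : ℕ, 1 + a * q ^ (j + 1) ≠ 0) (n : ℕ) :
    PP a q n ≠ 0 := by
  induction n with
  | zero => rw [PP_zero]; exact one_ne_zero
  | succ k ih => rw [PP_succ]; exact mul_ne_zero ih (hfac k)

lemma claimA (a q : ℂ) (hfac : ∀ j : ℕ, 1 + a * q ^ (j + 1) ≠ 0) (N : ℕ) :
    ∑ n ∈ Finset.range (N + 1), tt a q n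
      = (∑ n ∈ Finset.range (N + 1), rr a q n) + RR a q N := by
  induction N with
  | zero =>
      have h0 : PP a q 0 = 1 := PP_zero a q
      have hS : SS a q 0 = 1 := by
        simp [SS, Finset.sum_range_one, h0]
      simp only [Finset.sum_range_one, tt, rr, RR, hS, h0]
      norm_num
      exact h0
  | succ N ih =>
      rw [Finset.sum_range_succ, Finset.sum_range_succ (f := rr a q), ih,
        add_assoc, add_assoc]
      congr 1
      -- key step : RR N + tt (N+1) = rr (N+1) + RR (N+1)
      have key := star a q N
      have hPn := PP_ne a q hfac N
      have hF := hfac N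
      have eA : (N + 1) * (N + 1 + 1) / 2 = (N + 1) * (N + 2) / 2 := by
        have h2 : (N + 1) * (N + 1 + 1) = (N + 1) * (N + 2) := by ring
        omega
      have eB := eR N
      have eC : (N + 1 + 1) * (N + 1 + 2) / 2 = (N + 1) * (N + 2) / 2 + (N + 2) := by
        have h1 := eTri (N + 1)
        have h2 : (N + 1) * (N + 1 + 1) = (N + 1) * (N + 2) := by ring
        omega
      show RR a q N + tt a q (N + 1) = rr a q (N + 1) + RR a q (N + 1)
      rw [tt, rr, RR, RR, eA, eB, eC, PP_succ, pow_add, pow_add]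
      rw [PP_succ] at key
      rcases neg_one_pow_eq_or ℂ N with hε | hε
      · rw [pow_succ, hε] at key ⊢
        field_simp
        linear_combination (a ^ (2 * N + 2) * q ^ ((N + 1) * (N + 2) / 2)) * key
      · rw [pow_succ, hε] at key ⊢
        field_simp
        linear_combination (-(a ^ (2 * N + 2) * q ^ ((N + 1) * (N + 2) / 2))) * key

open Filter

lemma ev_le (q : ℂ) (hq : ‖q‖ < 1) (c ε : ℝ) (hc : 0 ≤ c) (hε : 0 < ε) (g : ℕ → ℕ)
    (hg : ∀ n, n ≤ g n) : ∀ᶠ n : ℕ in atTop, c * ‖q‖ ^ g n ≤ ε := by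
  have h0 : Tendsto (fun n : ℕ => c * ‖q‖ ^ n) atTop (nhds 0) := by
    simpa using (tendsto_pow_atTop_nhds_zero_of_lt_one (norm_nonneg q) hq).const_mul c
  filter_upwards [h0.eventually (gt_mem_nhds hε)] with n hn
  exact le_trans (mul_le_mul_of_nonneg_left
    (pow_le_pow_of_le_one (norm_nonneg q) hq.le (hg n)) hc) hn.le

lemma one_add_ge (x : ℂ) (hx : ‖x‖ ≤ 1 / 2) : (1 : ℝ) / 2 ≤ ‖1 + x‖ := by
  have h := norm_add_le (1 + x) (-x)
  simp only [add_neg_cancel_right, norm_neg, norm_one] at h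
  linarith

lemma tt_succ (a q : ℂ) (N : ℕ) :
    tt a q (N + 1) = tt a q N * (-(a ^ 2 * q ^ (N + 1)) / (1 + a * q ^ (N + 1))) := by
  have e : (N + 1) * (N + 1 + 1) / 2 = N * (N + 1) / 2 + (N + 1) := by
    have h1 := eTri N
    have h2 : (N + 1) * (N + 1 + 1) = (N + 1) * (N + 2) := by ring
    omega
  rw [tt, tt, PP_succ, e, pow_add, div_mul_div_comm]
  congr 1
  ring

lemma summable_tt (a q : ℂ) (hq : ‖q‖ < 1) : Summable (tt a q) := by
  apply summable_of_ratio_norm_eventually_le (r := 1 / 2) (by norm_num)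
  have E1 : ∀ᶠ n : ℕ in atTop, ‖a‖ * ‖q‖ ^ (n + 1) ≤ 1 / 2 :=
    ev_le q hq ‖a‖ (1 / 2) (norm_nonneg a) (by norm_num) (· + 1) (fun n => by simp)
  have E2 : ∀ᶠ n : ℕ in atTop, ‖a‖ ^ 2 * ‖q‖ ^ (n + 1) ≤ 1 / 4 :=
    ev_le q hq (‖a‖ ^ 2) (1 / 4) (by positivity) (by norm_num) (· + 1) (fun n => by simp)
  filter_upwards [E1, E2] with n h1 h2
  rw [tt_succ, norm_mul, mul_comm]
  apply mul_le_mul_of_nonneg_right _ (norm_nonneg _)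
  rw [norm_div, norm_neg, norm_mul, norm_pow, norm_pow]
  have hden : (1 : ℝ) / 2 ≤ ‖1 + a * q ^ (n + 1)‖ := by
    apply one_add_ge
    rw [norm_mul, norm_pow]; exact h1
  calc ‖a‖ ^ 2 * ‖q‖ ^ (n + 1) / ‖1 + a * q ^ (n + 1)‖
      ≤ (1 / 4) / (1 / 2) := div_le_div₀ (by norm_num) h2 (by norm_num) hden
    _ = 1 / 2 := by norm_num

lemma summable_rr (a q : ℂ) (hq : ‖q‖ < 1) : Summable (rr a q) := by
  apply summable_of_ratio_norm_eventually_le (r := 1 / 2) (by norm_num)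
  have E3 : ∀ᶠ n : ℕ in atTop, ‖a‖ ^ 2 * ‖q‖ ^ (2 * n + 1) ≤ 1 / 2 :=
    ev_le q hq (‖a‖ ^ 2) (1 / 2) (by positivity) (by norm_num) (fun n => 2 * n + 1)
      (fun n => by omega)
  have E3' : ∀ᶠ n : ℕ in atTop, ‖a‖ ^ 2 * ‖q‖ ^ (2 * n + 3) ≤ 1 / 2 :=
    ev_le q hq (‖a‖ ^ 2) (1 / 2) (by positivity) (by norm_num) (fun n => 2 * n + 3)
      (fun n => by omega)
  have E4 : ∀ᶠ n : ℕ in atTop, ‖a‖ ^ 3 * ‖q‖ ^ (3 * n + 2) ≤ 1 / 6 :=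
    ev_le q hq (‖a‖ ^ 3) (1 / 6) (by positivity) (by norm_num) (fun n => 3 * n + 2)
      (fun n => by omega)
  filter_upwards [E3, E3', E4] with n h3 h3' h4
  have hsplit : rr a q (n + 1)
      = (a ^ (3 * n) * q ^ (n * (3 * n + 1) / 2)) *
          ((a ^ 3 * q ^ (3 * n + 2)) * (1 - a ^ 2 * q ^ (2 * n + 3))) := by
    rw [rr, eTri3, pow_add, show 3 * (n + 1) = 3 * n + 3 by ring, pow_add,
      show 2 * (n + 1) + 1 = 2 * n + 3 by ring]
    ring
  have hrn : rr a q n = (a ^ (3 * n) * q ^ (n * (3 * n + 1) / 2)) *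
      (1 - a ^ 2 * q ^ (2 * n + 1)) := by rw [rr]
  set Y := a ^ (3 * n) * q ^ (n * (3 * n + 1) / 2) with hY
  have hu : ‖(1 : ℂ) - a ^ 2 * q ^ (2 * n + 3)‖ ≤ 3 / 2 := by
    calc ‖(1 : ℂ) - a ^ 2 * q ^ (2 * n + 3)‖ ≤ ‖(1 : ℂ)‖ + ‖a ^ 2 * q ^ (2 * n + 3)‖ :=
          norm_sub_le _ _
      _ ≤ 1 + 1 / 2 := by
          rw [norm_one, norm_mul, norm_pow, norm_pow]
          linarith
      _ = 3 / 2 := by norm_num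
  have hv : (1 : ℝ) / 2 ≤ ‖(1 : ℂ) - a ^ 2 * q ^ (2 * n + 1)‖ := by
    have h := one_add_ge (-(a ^ 2 * q ^ (2 * n + 1))) (by
      rw [norm_neg, norm_mul, norm_pow, norm_pow]; exact h3)
    simpa [sub_eq_add_neg] using h
  have hX : ‖a ^ 3 * q ^ (3 * n + 2)‖ ≤ 1 / 6 := by
    rw [norm_mul, norm_pow, norm_pow]; exact h4
  rw [hsplit, hrn, norm_mul Y, norm_mul Y, norm_mul (a ^ 3 * q ^ (3 * n + 2))]
  have hYn : (0 : ℝ) ≤ ‖Y‖ := norm_nonneg _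
  have hXn : (0 : ℝ) ≤ ‖a ^ 3 * q ^ (3 * n + 2)‖ := norm_nonneg _
  have hun : (0 : ℝ) ≤ ‖(1 : ℂ) - a ^ 2 * q ^ (2 * n + 3)‖ := norm_nonneg _
  nlinarith [mul_le_mul hX hu hun (by norm_num : (0:ℝ) ≤ 1/6),
    mul_le_mul_of_nonneg_left hv hYn]

lemma PP_norm_le (a q : ℂ) (hq : ‖q‖ < 1) (k : ℕ) : ‖PP a q k‖ ≤ (1 + ‖a‖) ^ k := by
  induction k with
  | zero => simp [PP_zero]
  | succ k ih =>
      rw [PP_succ, pow_succ, norm_mul]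
      apply mul_le_mul ih _ (norm_nonneg _) (by positivity)
      calc ‖1 + a * q ^ (k + 1)‖ ≤ ‖(1 : ℂ)‖ + ‖a * q ^ (k + 1)‖ := norm_add_le _ _
        _ ≤ 1 + ‖a‖ := by
            rw [norm_one, norm_mul, norm_pow]
            have : ‖a‖ * ‖q‖ ^ (k + 1) ≤ ‖a‖ * 1 :=
              mul_le_mul_of_nonneg_left (pow_le_one₀ (norm_nonneg q) hq.le) (norm_nonneg a)
            linarith

lemma SS_norm_le (a q : ℂ) (hq : ‖q‖ < 1) (N : ℕ) :
    ‖SS a q N‖ ≤ ((N : ℝ) + 1) * (‖a‖ * (1 + ‖a‖) + 1) ^ N := by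
  have hB1 : (1 : ℝ) ≤ ‖a‖ * (1 + ‖a‖) + 1 := by nlinarith [norm_nonneg a]
  calc ‖SS a q N‖ ≤ ∑ k ∈ Finset.range (N + 1),
        ‖(-1 : ℂ) ^ k * a ^ k * q ^ (k * (N + 1)) * PP a q k‖ := norm_sum_le _ _
    _ ≤ ∑ _k ∈ Finset.range (N + 1), (‖a‖ * (1 + ‖a‖) + 1) ^ N := by
        refine Finset.sum_le_sum fun k hk => ?_
        have hk' : k ≤ N := by
          have := Finset.mem_range.mp hk; omega
        rw [norm_mul, norm_mul, norm_mul, norm_pow, norm_pow, norm_pow, norm_neg, norm_one,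
          one_pow, one_mul]
        calc ‖a‖ ^ k * ‖q‖ ^ (k * (N + 1)) * ‖PP a q k‖
            ≤ ‖a‖ ^ k * 1 * (1 + ‖a‖) ^ k := by
              apply mul_le_mul _ (PP_norm_le a q hq k) (norm_nonneg _) (by positivity)
              exact mul_le_mul_of_nonneg_left (pow_le_one₀ (norm_nonneg q) hq.le)
                (by positivity)
          _ = (‖a‖ * (1 + ‖a‖)) ^ k := by rw [mul_one, mul_pow]
          _ ≤ (‖a‖ * (1 + ‖a‖) + 1) ^ k := by
              apply pow_le_pow_left₀ (by positivity) (by linarith)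
          _ ≤ (‖a‖ * (1 + ‖a‖) + 1) ^ N := pow_le_pow_right₀ hB1 hk'
    _ = ((N : ℝ) + 1) * (‖a‖ * (1 + ‖a‖) + 1) ^ N := by
        rw [Finset.sum_const, Finset.card_range, nsmul_eq_mul]
        push_cast
        ring

lemma RR_tendsto (a q : ℂ) (hq : ‖q‖ < 1) (hfac : ∀ j : ℕ, 1 + a * q ^ (j + 1) ≠ 0) :
    Tendsto (RR a q) atTop (nhds 0) := by
  rw [tendsto_zero_iff_norm_tendsto_zero]
  have hB1 : (1 : ℝ) ≤ ‖a‖ * (1 + ‖a‖) + 1 := by nlinarith [norm_nonneg a]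
  have hA1 : (1 : ℝ) ≤ 1 + ‖a‖ := by have := norm_nonneg a; linarith
  have hK0 : (0 : ℝ) ≤ (1 + ‖a‖) ^ 2 * (‖a‖ * (1 + ‖a‖) + 1) * 2 := by positivity
  obtain ⟨J, hJ⟩ : ∃ J, ∀ n ≥ J, ‖a‖ * ‖q‖ ^ (n + 1) ≤ 1 / 2 :=
    eventually_atTop.mp (ev_le q hq ‖a‖ (1 / 2) (norm_nonneg a) (by norm_num) (· + 1)
      (fun n => by simp))
  have hc0pos : (0 : ℝ) < ‖PP a q J‖ * 2 ^ J :=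
    mul_pos (norm_pos_iff.mpr (PP_ne a q hfac J)) (by positivity)
  have hPlb : ∀ N, J ≤ N → ‖PP a q J‖ * 2 ^ J ≤ ‖PP a q N‖ * 2 ^ N := by
    intro N hN
    induction N, hN using Nat.le_induction with
    | base => exact le_refl _
    | succ N hN ih =>
        have hF : (1 : ℝ) / 2 ≤ ‖1 + a * q ^ (N + 1)‖ :=
          one_add_ge _ (by rw [norm_mul, norm_pow]; exact hJ N hN)
        rw [PP_succ, norm_mul]
        have h2N : (0 : ℝ) < 2 ^ N := by positivity
        calc ‖PP a q J‖ * 2 ^ J ≤ ‖PP a q N‖ * 2 ^ N := ih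
          _ ≤ ‖PP a q N‖ * ‖1 + a * q ^ (N + 1)‖ * 2 ^ (N + 1) := by
              rw [show (2:ℝ) ^ (N + 1) = 2 ^ N * 2 from pow_succ 2 N]
              nlinarith [mul_le_mul_of_nonneg_right
                (mul_le_mul_of_nonneg_left hF (norm_nonneg (PP a q N))) h2N.le]
  obtain ⟨m, hm⟩ : ∃ m : ℕ,
      (1 + ‖a‖) ^ 2 * (‖a‖ * (1 + ‖a‖) + 1) * 2 * ‖q‖ ^ m ≤ 1 / 2 :=
    (ev_le q hq _ (1 / 2) hK0 (by norm_num) id (fun n => le_refl n)).exists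
  have hs : Summable (fun n : ℕ => ((n : ℝ) + 1) * (1 / 2) ^ n) := by
    have h1 : Summable (fun n : ℕ => (n : ℝ) * (1 / 2) ^ n) := by
      simpa using summable_pow_mul_geometric_of_norm_lt_one 1 (r := (1 / 2 : ℝ)) (by norm_num)
    have h2 : Summable (fun n : ℕ => ((1 : ℝ) / 2) ^ n) :=
      summable_geometric_of_lt_one (by norm_num) (by norm_num)
    simpa [add_mul] using h1.add h2
  refine squeeze_zero'
    (g := fun N : ℕ => ((1 + ‖a‖) ^ 2 / (‖PP a q J‖ * 2 ^ J)) * (((N : ℝ) + 1) * (1 / 2) ^ N))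
    (Eventually.of_forall fun n => norm_nonneg _) ?_ ?_
  · filter_upwards [eventually_ge_atTop J, eventually_ge_atTop (2 * m)] with N hNJ hNm
    have hT : m * N ≤ (N + 1) * (N + 2) / 2 := by
      rw [Nat.le_div_iff_mul_le (by norm_num : 0 < 2)]
      calc m * N * 2 = 2 * m * N := by ring
        _ ≤ (N + 2) * N := Nat.mul_le_mul_right N (by omega)
        _ ≤ (N + 1) * (N + 2) := by nlinarith
    have hRRn : ‖RR a q N‖
        = ‖a‖ ^ (2 * N + 2) * ‖q‖ ^ ((N + 1) * (N + 2) / 2) * ‖SS a q N‖ / ‖PP a q N‖ := by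
      rw [RR, norm_div, norm_mul, norm_mul, norm_mul, norm_pow, norm_pow, norm_pow,
        norm_neg, norm_one, one_pow, one_mul]
    have hPN : ‖PP a q J‖ * 2 ^ J / 2 ^ N ≤ ‖PP a q N‖ :=
      (div_le_iff₀ (by positivity : (0:ℝ) < 2 ^ N)).mpr (hPlb N hNJ)
    calc ‖RR a q N‖
        ≤ ‖a‖ ^ (2 * N + 2) * ‖q‖ ^ ((N + 1) * (N + 2) / 2) * ‖SS a q N‖ /
            (‖PP a q J‖ * 2 ^ J / 2 ^ N) := by
          rw [hRRn]
          exact div_le_div_of_nonneg_left (by positivity) (by positivity) hPN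
      _ = ‖a‖ ^ (2 * N + 2) * ‖q‖ ^ ((N + 1) * (N + 2) / 2) * ‖SS a q N‖ * 2 ^ N /
            (‖PP a q J‖ * 2 ^ J) := div_div_eq_mul_div _ _ _
      _ ≤ (1 + ‖a‖) ^ (2 * N + 2) * (‖q‖ ^ m) ^ N *
            (((N : ℝ) + 1) * (‖a‖ * (1 + ‖a‖) + 1) ^ N) * 2 ^ N / (‖PP a q J‖ * 2 ^ J) := by
          have g1 : ‖a‖ ^ (2 * N + 2) ≤ (1 + ‖a‖) ^ (2 * N + 2) :=
            pow_le_pow_left₀ (norm_nonneg a) (by linarith : ‖a‖ ≤ 1 + ‖a‖) _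
          have g2 : ‖q‖ ^ ((N + 1) * (N + 2) / 2) ≤ (‖q‖ ^ m) ^ N := by
            rw [← pow_mul]
            exact pow_le_pow_of_le_one (norm_nonneg q) hq.le hT
          have g3 := SS_norm_le a q hq N
          gcongr

      _ = ((1 + ‖a‖) ^ 2 / (‖PP a q J‖ * 2 ^ J)) * (((N : ℝ) + 1) *
            ((1 + ‖a‖) ^ 2 * (‖a‖ * (1 + ‖a‖) + 1) * 2 * ‖q‖ ^ m) ^ N) := by
          rw [div_mul_eq_mul_div, mul_pow, mul_pow, mul_pow,
            show ((1 + ‖a‖) ^ 2) ^ N = (1 + ‖a‖) ^ (2 * N) from (pow_mul _ 2 N).symm]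
          congr 1
          ring
      _ ≤ ((1 + ‖a‖) ^ 2 / (‖PP a q J‖ * 2 ^ J)) * (((N : ℝ) + 1) * (1 / 2) ^ N) := by
          gcongr
  · simpa using (hs.tendsto_atTop_zero).const_mul ((1 + ‖a‖) ^ 2 / (‖PP a q J‖ * 2 ^ J))

end BY31

theorem berndt_yee_3_1 (a q : ℂ) (hq : ‖q‖ < 1)
    (ha : ∀ m : ℕ, -(a * q) ≠ (q ^ m)⁻¹) :
    ∑' n : ℕ, (-1) ^ n * a ^ (2 * n) * q ^ (n * (n + 1) / 2) / qPoch (-a * q) q n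
      = ∑' n : ℕ, a ^ (3 * n) * q ^ (n * (3 * n + 1) / 2) * (1 - a ^ 2 * q ^ (2 * n + 1)) := by
  have hfac : ∀ j : ℕ, 1 + a * q ^ (j + 1) ≠ 0 := by
    intro j h
    apply ha j
    have h1 : q ^ j * -(a * q) = 1 := by
      rw [pow_succ] at h
      linear_combination -h
    exact eq_inv_of_mul_eq_one_right h1
  have e1 : (fun n : ℕ => (-1) ^ n * a ^ (2 * n) * q ^ (n * (n + 1) / 2) / qPoch (-a * q) q n)
      = BY31.tt a q := rfl
  have e2 : (fun n : ℕ => a ^ (3 * n) * q ^ (n * (3 * n + 1) / 2) * (1 - a ^ 2 * q ^ (2 * n + 1)))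
      = BY31.rr a q := rfl
  rw [e1, e2]
  have hst := (BY31.summable_tt a q hq).hasSum.tendsto_sum_nat
  have hsr := (BY31.summable_rr a q hq).hasSum.tendsto_sum_nat
  have h2 : Filter.Tendsto (fun N => ∑ n ∈ Finset.range (N + 1), BY31.tt a q n) Filter.atTop
      (nhds (∑' n, BY31.tt a q n)) := hst.comp (Filter.tendsto_add_atTop_nat 1)
  have h3 : Filter.Tendsto (fun N => ∑ n ∈ Finset.range (N + 1), BY31.rr a q n) Filter.atTop
      (nhds (∑' n, BY31.rr a q n)) := hsr.comp (Filter.tendsto_add_atTop_nat 1)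
  have h4 := h3.add (BY31.RR_tendsto a q hq hfac)
  rw [add_zero] at h4
  have h5 : (fun N => ∑ n ∈ Finset.range (N + 1), BY31.tt a q n)
      = fun N => (∑ n ∈ Finset.range (N + 1), BY31.rr a q n) + BY31.RR a q N :=
    funext (BY31.claimA a q hfac)
  rw [h5] at h2
  exact tendsto_nhds_unique h2 h4
end
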